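/- arXiv:2110.08492 — 7 statements merged into one kernel-verified Lean document; each statement's English description precedes it below -/
import Mathlib

section
/- There is a constant C such that the following holds: for every finite set Ω and every solvable permutation group G ≤ Sym(Ω), there exists a subset Δ ⊆ Ω such that every orbit of the setwise stabilizer G_Δ on Ω has length at most C. -/
/-- The setwise stabilizer of `Δ` in the permutation group `G ≤ Sym(Ω)`:
the subgroup `{g ∈ G : g(Δ) = Δ}`. -/

def setwiseStabilizer {Ω : Type*} (G : Subgroup (Equiv.Perm Ω)) (Δ : Set Ω) :
    Subgroup ↥G where
  carrier := {g : ↥G | (g : Equiv.Perm Ω) '' Δ = Δ}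
  one_mem' := by simp
  mul_mem' := by
    intro a b ha hb
    simp only [Set.mem_setOf_eq] at *
    rw [Subgroup.coe_mul, Equiv.Perm.coe_mul, Set.image_comp, hb, ha]
  inv_mem' := by
    intro a ha
    simp only [Set.mem_setOf_eq] at *
    conv_lhs => rw [← ha]
    rw [← Set.image_comp]
    simp

open MulAction Set

abbrev CB : ℕ := 511 * 511

def Good {Ω : Type} [Fintype Ω] (G : Subgroup (Equiv.Perm Ω)) (Δ : Set Ω) : Prop :=
  ∀ x : Ω, (MulAction.orbit ↥(setwiseStabilizer G Δ) x).ncard ≤ CB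

def SEq {Ω : Type} (G : Subgroup (Equiv.Perm Ω)) (Δ Δ' : Set Ω) : Prop :=
  ∃ g : ↥G, (g : Equiv.Perm Ω) '' Δ = Δ'

lemma orbit_sws (Ω : Type) [Fintype Ω] (G : Subgroup (Equiv.Perm Ω)) (Δ : Set Ω) (x : Ω) :
    MulAction.orbit ↥(setwiseStabilizer G Δ) x
      = {y | ∃ g : ↥G, (g : Equiv.Perm Ω) '' Δ = Δ ∧ (g : Equiv.Perm Ω) x = y} := by
  ext y
  constructor
  · rintro ⟨⟨g, hg⟩, rfl⟩
    exact ⟨g, hg, rfl⟩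
  · rintro ⟨g, hg, rfl⟩
    exact ⟨⟨g, hg⟩, rfl⟩

lemma Good_of_card_le {Ω : Type} [Fintype Ω] (G : Subgroup (Equiv.Perm Ω))
    (h : Fintype.card Ω ≤ CB) (Δ : Set Ω) : Good G Δ := by
  intro x
  calc (MulAction.orbit ↥(setwiseStabilizer G Δ) x).ncard
      ≤ (Set.univ : Set Ω).ncard := Set.ncard_le_ncard (Set.subset_univ _) (Set.finite_univ)
    _ = Fintype.card Ω := by rw [Set.ncard_univ, Nat.card_eq_fintype_card]
    _ ≤ CB := h

lemma ncard_SEq {Ω : Type} [Fintype Ω] (G : Subgroup (Equiv.Perm Ω)) {Δ Δ' : Set Ω}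
    (h : SEq G Δ Δ') : Δ.ncard = Δ'.ncard := by
  obtain ⟨g, rfl⟩ := h
  exact (Set.ncard_image_of_injective _ (Equiv.injective _)).symm

lemma base_case (n : ℕ) (Ω : Type) [Fintype Ω] (hcard : Fintype.card Ω = n)
    (hn : n ≤ CB) (G : Subgroup (Equiv.Perm Ω)) :
    ∃ T : Fin (min (n+1) 512) → Set Ω,
      (∀ j, Good G (T j)) ∧ (∀ i j, i ≠ j → ¬ SEq G (T i) (T j)) := by
  have hsub : ∀ j : Fin (min (n+1) 512), ∃ s : Set Ω, s.ncard = (j : ℕ) := by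
    intro j
    have hj : (j : ℕ) ≤ n := by
      have := j.2; omega
    have huniv : (j : ℕ) ≤ (Set.univ : Set Ω).ncard := by
      rw [Set.ncard_univ, Nat.card_eq_fintype_card, hcard]; exact hj
    obtain ⟨s, -, hs⟩ := Set.exists_subset_card_eq huniv
    exact ⟨s, hs⟩
  choose T hT using hsub
  refine ⟨T, fun j => Good_of_card_le G (by omega) _, ?_⟩
  intro i j hij hSE
  have := ncard_SEq G hSE
  rw [hT i, hT j] at this
  exact hij (Fin.ext this)
section Blocks
set_option linter.unusedSectionVars false

open MulAction Set

variable {Ω : Type} [Fintype Ω]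

def IsInv (G : Subgroup (Equiv.Perm Ω)) (r : Setoid Ω) : Prop :=
  ∀ (g : ↥G) (x y : Ω), r x y → r ((g : Equiv.Perm Ω) x) ((g : Equiv.Perm Ω) y)

instance : Finite (Setoid Ω) :=
  Finite.of_injective (fun r : Setoid Ω => r.r)
    (fun r s h => Setoid.ext fun a b => by rw [show r.r = s.r from h])

lemma exists_maximal_wrt' {α β : Type*} [PartialOrder β] (f : α → β) (s : Set α)
    (h : s.Finite) (hs : s.Nonempty) : ∃ a ∈ s, ∀ a' ∈ s, f a ≤ f a' → f a = f a' := by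
  obtain ⟨a, ha⟩ := Set.Finite.exists_maximalFor f s h hs
  exact ⟨a, ha.1, fun a' h1 h2 => le_antisymm h2 (ha.2 h1 h2)⟩

lemma exists_minimal_wrt' {α β : Type*} [PartialOrder β] (f : α → β) (s : Set α)
    (h : s.Finite) (hs : s.Nonempty) : ∃ a ∈ s, ∀ a' ∈ s, f a' ≤ f a → f a = f a' := by
  obtain ⟨a, ha⟩ := Set.Finite.exists_minimalFor f s h hs
  exact ⟨a, ha.1, fun a' h1 h2 => le_antisymm (ha.2 h1 h2) h2⟩

lemma bot_isInv (G : Subgroup (Equiv.Perm Ω)) : IsInv G ⊥ := by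
  intro g x y h
  rw [Setoid.bot_def] at *
  rw [h]

lemma bot_setoid_ne_top (h2 : 2 ≤ Fintype.card Ω) : (⊥ : Setoid Ω) ≠ ⊤ := by
  obtain ⟨x, y, hxy⟩ := Fintype.exists_pair_of_one_lt_card h2
  intro h
  have : (⊥ : Setoid Ω) x y := by rw [h]; trivial
  rw [Setoid.bot_def] at this
  exact hxy this

lemma exists_maximal_inv (G : Subgroup (Equiv.Perm Ω)) (h2 : 2 ≤ Fintype.card Ω) :
    ∃ r : Setoid Ω, IsInv G r ∧ r ≠ ⊤ ∧
      ∀ s : Setoid Ω, IsInv G s → s ≠ ⊤ → r ≤ s → r = s := by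
  have hfin : ({r : Setoid Ω | IsInv G r ∧ r ≠ ⊤}).Finite := Set.toFinite _
  have hne : ({r : Setoid Ω | IsInv G r ∧ r ≠ ⊤}).Nonempty :=
    ⟨⊥, bot_isInv G, bot_setoid_ne_top h2⟩
  obtain ⟨r, hr, hmax⟩ := exists_maximal_wrt' id _ hfin hne
  exact ⟨r, hr.1, hr.2, fun s hs1 hs2 hle => hmax s ⟨hs1, hs2⟩ hle⟩

variable {G : Subgroup (Equiv.Perm Ω)} {r : Setoid Ω}

/-- The permutation of the quotient induced by `g`. -/
def quotPerm (hinv : IsInv G r) (g : ↥G) : Equiv.Perm (Quotient r) :=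
  Quotient.congr (g : Equiv.Perm Ω) (fun a b => ⟨fun h => hinv g a b h, fun h => by
    have h2 := hinv g⁻¹ _ _ h
    simpa using h2⟩)

@[simp] lemma quotPerm_mk (hinv : IsInv G r) (g : ↥G) (x : Ω) :
    quotPerm hinv g (Quotient.mk r x) = Quotient.mk r ((g : Equiv.Perm Ω) x) := rfl

/-- The homomorphism to the permutation group of the quotient. -/
def quotHom (hinv : IsInv G r) : ↥G →* Equiv.Perm (Quotient r) where
  toFun := quotPerm hinv
  map_one' := by
    ext σ
    induction σ using Quotient.ind
    simp
  map_mul' g h := by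
    ext σ
    induction σ using Quotient.ind
    simp

@[simp] lemma quotHom_mk (hinv : IsInv G r) (g : ↥G) (x : Ω) :
    quotHom hinv g (Quotient.mk r x) = Quotient.mk r ((g : Equiv.Perm Ω) x) := rfl

lemma quot_primitive (hinv : IsInv G r)
    (hmax : ∀ s : Setoid Ω, IsInv G s → s ≠ ⊤ → r ≤ s → r = s)
    (s : Setoid (Quotient r)) (hsinv : IsInv (quotHom hinv).range s) :
    s = ⊥ ∨ s = ⊤ := by
  set f : Ω → Quotient r := Quotient.mk r with hf
  have hs'inv : IsInv G (Setoid.comap f s) := by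
    intro g x y h
    have := hsinv ⟨quotHom hinv g, ⟨g, rfl⟩⟩ (f x) (f y) h
    exact this
  have hler : r ≤ Setoid.comap f s := by
    intro x y hxy
    have : f x = f y := Quotient.sound hxy
    show s (f x) (f y)
    rw [this]
  by_cases htop : Setoid.comap f s = ⊤
  · right
    rw [Setoid.eq_top_iff]
    intro σ τ
    obtain ⟨x, rfl⟩ := Quotient.exists_rep σ
    obtain ⟨y, rfl⟩ := Quotient.exists_rep τ
    have hxy : (Setoid.comap f s) x y := by rw [htop]; trivial
    exact hxy
  · left
    have heq := hmax _ hs'inv htop hler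
    ext σ τ
    rw [Setoid.bot_def]
    obtain ⟨x, rfl⟩ := Quotient.exists_rep σ
    obtain ⟨y, rfl⟩ := Quotient.exists_rep τ
    constructor
    · intro h
      have : Setoid.comap f s x y := h
      rw [← heq] at this
      exact Quotient.sound this
    · intro h
      rw [show (Quotient.mk r x) = Quotient.mk r y from h]
end Blocks
section GroupFacts

variable {K : Type*} [Group K]

lemma dvd_half_of_ne {d c : ℕ} (hdvd : d ∣ c) (hne : d ≠ c) (hc : 0 < c) : 2 * d ≤ c := by
  obtain ⟨k, rfl⟩ := hdvd
  rcases k with _ | _ | k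
  · omega
  · omega
  · nlinarith

instance finite_subgroup [Finite K] : Finite (Subgroup K) :=
  Finite.of_injective (fun H : Subgroup K => (H : Set K)) SetLike.coe_injective

lemma card_lt_of_lt [Finite K] {H₁ H₂ : Subgroup K} (h : H₁ < H₂) :
    Nat.card H₁ < Nat.card H₂ := by
  have h1 : (H₁ : Set K) ⊂ (H₂ : Set K) := by
    rw [Set.ssubset_iff_of_subset (by exact_mod_cast h.le)]
    obtain ⟨x, hx2, hx1⟩ := SetLike.exists_of_lt h
    exact ⟨x, hx2, hx1⟩
  have := Set.ncard_lt_ncard h1 (Set.toFinite _)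
  simpa [← Nat.card_coe_set_eq, ← SetLike.coe_sort_coe] using this

lemma two_mul_card_le_of_lt [Finite K] {H₁ H₂ : Subgroup K} (h : H₁ < H₂) :
    2 * Nat.card H₁ ≤ Nat.card H₂ :=
  dvd_half_of_ne (Subgroup.card_dvd_of_le h.le) (card_lt_of_lt h).ne Nat.card_pos

/-- Every subgroup of a finite group is generated by at most `log₂` many elements. -/
lemma exists_small_gens [Finite K] (H : Subgroup K) :
    ∃ S : Finset K, Subgroup.closure (S : Set K) = H ∧ 2 ^ S.card ≤ Nat.card H := by
  generalize hn : Nat.card H = n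
  induction n using Nat.strong_induction_on generalizing H with
  | _ n ih =>
  subst hn
  by_cases hbot : H = ⊥
  · exact ⟨∅, by simpa using hbot.symm, by simp [hbot, Nat.card_eq_fintype_card]⟩
  · -- take a maximal proper subgroup of H
    have hne : ({L : Subgroup K | L < H}).Nonempty := ⟨⊥, bot_lt_iff_ne_bot.2 hbot⟩
    obtain ⟨L, hL, hLmax⟩ := exists_maximal_wrt' id _ (Set.toFinite _) hne
    simp only [Set.mem_setOf_eq, id] at hL hLmax
    obtain ⟨x, hxH, hxL⟩ := SetLike.exists_of_lt hL
    have hgen : Subgroup.closure ((L : Set K) ∪ {x}) = H := by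
      set L' := Subgroup.closure ((L : Set K) ∪ {x}) with hL'
      have hsub : L' ≤ H := by
        apply Subgroup.closure_le _ |>.2
        rintro y (hy | rfl)
        · exact hL.le hy
        · exact hxH
      have hlt : L < L' := by
        refine lt_of_le_of_ne (fun y hy => Subgroup.subset_closure (Set.mem_union_left _ hy)) ?_
        intro hEq
        exact hxL (hEq ▸ Subgroup.subset_closure (Set.mem_union_right _ rfl))
      by_contra hne'
      exact (lt_irrefl L') (hLmax L' (lt_of_le_of_ne hsub hne') hlt.le ▸ hlt)
    obtain ⟨S, hSgen, hScard⟩ := ih (Nat.card ↥L) (card_lt_of_lt hL) L rfl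
    classical
    refine ⟨insert x S, ?_, ?_⟩
    · have h1 : Subgroup.closure ((insert x S : Finset K) : Set K)
          = Subgroup.closure ({x} ∪ (L : Set K)) := by
        rw [Finset.coe_insert, Set.insert_eq, Subgroup.closure_union, hSgen,
          Subgroup.closure_union, Subgroup.closure_eq]
      rw [h1, Set.union_comm, hgen]
    · calc 2 ^ (insert x S).card ≤ 2 ^ (S.card + 1) :=
            Nat.pow_le_pow_right (by norm_num) (Finset.card_insert_le _ _)
        _ = 2 * 2 ^ S.card := by ring
        _ ≤ 2 * Nat.card L := by omega
        _ ≤ Nat.card H := two_mul_card_le_of_lt hL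

/-- A finite nontrivial group has a minimal nontrivial normal subgroup. -/
lemma exists_minimal_normal [Finite K] (hK : (⊤ : Subgroup K) ≠ ⊥) :
    ∃ M : Subgroup K, M.Normal ∧ M ≠ ⊥ ∧
      ∀ N : Subgroup K, N.Normal → N ≠ ⊥ → N ≤ M → N = M := by
  have hne : ({N : Subgroup K | N.Normal ∧ N ≠ ⊥}).Nonempty := ⟨⊤, ⟨inferInstance, hK⟩⟩
  obtain ⟨M, hM, hMmin⟩ := exists_minimal_wrt' id _ (Set.toFinite _) hne
  exact ⟨M, hM.1, hM.2, fun N h1 h2 h3 => (hMmin N ⟨h1, h2⟩ h3).symm⟩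

/-- A nontrivial normal subgroup of a solvable group is not perfect. -/
lemma not_perfect_of_solvable [Group.IsSolvable K] (M : Subgroup K) (hM : M ≠ ⊥)
    (hperf : ⁅M, M⁆ = M) : False := by
  obtain ⟨g, hgM, hg1⟩ : ∃ g ∈ M, g ≠ (1 : K) := by
    by_contra h
    push_neg at h
    exact hM (by ext y; simp only [Subgroup.mem_bot]; exact ⟨fun hy => h y hy, by rintro rfl; exact M.one_mem⟩)
  refine not_solvable_of_mem_derivedSeries hg1 (fun n => ?_) ‹IsSolvable K›
  have : ∀ n, M ≤ derivedSeries K n := by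
    intro n
    induction n with
    | zero => exact le_top
    | succ n ihn =>
      rw [derivedSeries_succ, ← hperf]
      exact Subgroup.commutator_mono ihn ihn
  exact this n hgM

/-- elements of an abelian subgroup commute -/
lemma mul_comm_of_commutator_bot {M : Subgroup K} (h : ⁅M, M⁆ = ⊥)
    {a b : K} (ha : a ∈ M) (hb : b ∈ M) : a * b = b * a := by
  have := Subgroup.commutator_eq_bot_iff_le_centralizer.1 h ha
  rw [Subgroup.mem_centralizer_iff] at this
  exact (this b hb).symm

end GroupFacts
section Prim
set_option linter.unusedSectionVars false
open MulAction Set Equiv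

variable {X : Type} [Fintype X] {K : Subgroup (Equiv.Perm X)}

/-- pointwise iff gives image equality, for a bijection -/
lemma perm_image_eq_of_iff {α β : Type*} (p : α ≃ β) (A : Set α) (B : Set β)
    (h : ∀ y : α, p y ∈ B ↔ y ∈ A) : p '' A = B := by
  ext z
  constructor
  · rintro ⟨y, hy, rfl⟩; exact (h y).2 hy
  · intro hz
    refine ⟨p.symm z, ?_, by simp⟩
    have := h (p.symm z)
    simp only [Equiv.apply_symm_apply] at this
    exact this.1 hz

variable (K) in
/-- The action of `K` is transitive. -/
def KTrans : Prop := ∀ x y : X, ∃ g : ↥K, (g : Equiv.Perm X) x = y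

lemma ktop_ne_bot (htrans : KTrans K) (h2 : 2 ≤ Fintype.card X) :
    (⊤ : Subgroup ↥K) ≠ ⊥ := by
  obtain ⟨x, y, hxy⟩ := Fintype.exists_pair_of_one_lt_card h2
  obtain ⟨g, hg⟩ := htrans x y
  intro h
  have : g ∈ (⊥ : Subgroup ↥K) := h ▸ Subgroup.mem_top g
  rw [Subgroup.mem_bot] at this
  subst this
  simp only [OneMemClass.coe_one, Equiv.Perm.coe_one, id_eq] at hg
  exact hxy hg

/-- The orbit setoid of a normal subgroup is invariant. -/
def orbSetoid (M : Subgroup ↥K) [M.Normal] : Setoid X where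
  r x y := ∃ mm : ↥K, mm ∈ M ∧ (mm : Equiv.Perm X) x = y
  iseqv := by
    constructor
    · exact fun x => ⟨1, Subgroup.one_mem M, rfl⟩
    · rintro x y ⟨mm, hm, rfl⟩
      refine ⟨mm⁻¹, Subgroup.inv_mem M hm, ?_⟩
      simp
    · rintro x y z ⟨mm, hm, rfl⟩ ⟨mm', hm', rfl⟩
      exact ⟨mm' * mm, Subgroup.mul_mem M hm' hm, rfl⟩

lemma orbSetoid_inv (M : Subgroup ↥K) [hN : M.Normal] : IsInv K (orbSetoid M) := by
  rintro g x y ⟨mm, hm, rfl⟩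
  refine ⟨g * mm * g⁻¹, hN.conj_mem mm hm g, ?_⟩
  simp

/-- In the primitive situation, a nontrivial normal subgroup is transitive. -/
lemma normal_transitive (hprim : ∀ s : Setoid X, IsInv K s → s = ⊥ ∨ s = ⊤)
    (M : Subgroup ↥K) [M.Normal] (hM : M ≠ ⊥) (x y : X) :
    ∃ mm : ↥K, mm ∈ M ∧ (mm : Equiv.Perm X) x = y := by
  rcases hprim (orbSetoid M) (orbSetoid_inv M) with h | h
  · exfalso
    apply hM
    rw [eq_bot_iff]
    intro mm hmm
    have : ∀ z : X, (mm : Equiv.Perm X) z = z := by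
      intro z
      have hz : (orbSetoid M) z ((mm : Equiv.Perm X) z) := ⟨mm, hmm, rfl⟩
      rw [h] at hz
      exact hz.symm
    have h1 : (mm : Equiv.Perm X) = 1 := Equiv.ext fun z => this z
    rw [Subgroup.mem_bot]
    ext
    exact congrFun (congrArg _ h1) _
  · have : (orbSetoid M) x y := by rw [h]; trivial
    exact this

end Prim
section Count
set_option linter.unusedSectionVars false
open Set

variable {X : Type} [Fintype X]

/-- The orbit setoid of the cyclic group generated by a permutation. -/
def zsetoid (g : Equiv.Perm X) : Setoid X where
  r x y := ∃ k : ℤ, (g ^ k) x = y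
  iseqv := by
    constructor
    · exact fun x => ⟨0, rfl⟩
    · rintro x y ⟨k, rfl⟩
      exact ⟨-k, by rw [← Equiv.Perm.mul_apply, ← zpow_add]; simp⟩
    · rintro x y z ⟨k, rfl⟩ ⟨k', rfl⟩
      exact ⟨k' + k, by rw [zpow_add, Equiv.Perm.mul_apply]⟩

lemma mem_iff_zpow (g : Equiv.Perm X) (Γ : Set X) (h : g '' Γ = Γ) :
    ∀ k : ℤ, ∀ x : X, (g ^ k) x ∈ Γ ↔ x ∈ Γ := by
  have step : ∀ x : X, g x ∈ Γ ↔ x ∈ Γ := by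
    intro x
    constructor
    · intro hx
      rw [← h] at hx
      obtain ⟨z, hz, hzx⟩ := hx
      rwa [g.injective hzx] at hz
    · intro hx
      rw [← h]
      exact ⟨x, hx, rfl⟩
  intro k
  induction k using Int.induction_on with
  | zero => simp
  | succ n ihn =>
    intro x
    have : (g ^ ((n : ℤ) + 1)) x = (g ^ (n : ℤ)) (g x) := by
      rw [zpow_add, zpow_one, Equiv.Perm.mul_apply]
    rw [this, ihn (g x)]
    exact step x
  | pred n ihn =>
    intro x
    have : (g ^ (-(n : ℤ) - 1)) x = (g ^ (-(n : ℤ))) (g⁻¹ x) := by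
      rw [zpow_sub, zpow_one, Equiv.Perm.mul_apply]
    rw [this, ihn (g⁻¹ x)]
    constructor
    · intro hx
      have := (step (g⁻¹ x)).2 hx
      simpa using this
    · intro hx
      have : g (g⁻¹ x) ∈ Γ := by simpa using hx
      exact (step (g⁻¹ x)).1 this

lemma invariant_count (g : Equiv.Perm X) :
    {Γ : Set X | g '' Γ = Γ}.ncard ≤ 2 ^ Nat.card (Quotient (zsetoid g)) := by
  classical
  letI : Fintype (Quotient (zsetoid g)) := Fintype.ofFinite _
  set Q := Quotient (zsetoid g)
  set F : Set X → Set Q := fun Γ => (Quotient.mk (zsetoid g)) '' Γ with hF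
  have hrec : ∀ Γ ∈ {Γ : Set X | g '' Γ = Γ}, (Quotient.mk (zsetoid g)) ⁻¹' (F Γ) = Γ := by
    intro Γ hΓ
    ext x
    simp only [hF, Set.mem_preimage, Set.mem_image]
    constructor
    · rintro ⟨y, hy, hyx⟩
      obtain ⟨k, rfl⟩ : (zsetoid g) y x := Quotient.exact hyx
      exact (mem_iff_zpow g Γ hΓ k y).2 hy
    · intro hx
      exact ⟨x, hx, rfl⟩
  have hinj : Set.InjOn F {Γ : Set X | g '' Γ = Γ} := by
    intro Γ₁ h1 Γ₂ h2 hEq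
    rw [← hrec Γ₁ h1, ← hrec Γ₂ h2, hEq]
  calc {Γ : Set X | g '' Γ = Γ}.ncard
      ≤ (Set.univ : Set (Set Q)).ncard :=
        Set.ncard_le_ncard_of_injOn F (fun _ _ => Set.mem_univ _) hinj Set.finite_univ
    _ = Nat.card (Set Q) := Set.ncard_univ _
    _ = 2 ^ Nat.card Q := by
        rw [Nat.card_eq_fintype_card, Nat.card_eq_fintype_card, Fintype.card_set]

lemma orbcount (g : Equiv.Perm X) :
    2 * Nat.card (Quotient (zsetoid g)) ≤ Fintype.card X + {x : X | g x = x}.ncard := by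
  classical
  letI : Fintype (Quotient (zsetoid g)) := Fintype.ofFinite _
  set Q := Quotient (zsetoid g)
  set f : X → Q := Quotient.mk (zsetoid g) with hf
  have hcard : Fintype.card X = ∑ q : Q, Fintype.card {x // f x = q} := by
    rw [← Fintype.card_sigma]
    exact Fintype.card_congr (Equiv.sigmaFiberEquiv f).symm
  have hpos : ∀ q : Q, 1 ≤ Fintype.card {x // f x = q} := by
    intro q
    obtain ⟨x, rfl⟩ := Quotient.exists_rep q
    exact Fintype.card_pos_iff.2 ⟨⟨x, rfl⟩⟩
  set A : Finset Q := Finset.univ.filter (fun q => Fintype.card {x // f x = q} = 1) with hA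
  have hbig : ∀ q ∈ Finset.univ \ A, 2 ≤ Fintype.card {x // f x = q} := by
    intro q hq
    simp only [hA, Finset.mem_sdiff, Finset.mem_filter, Finset.mem_univ, true_and] at hq
    have := hpos q
    omega
  rcases isEmpty_or_nonempty X with hX | hX
  · have : Fintype.card Q = 0 := by
      rw [Fintype.card_eq_zero_iff]
      refine ⟨fun q => ?_⟩
      obtain ⟨x, -⟩ := Quotient.exists_rep q
      exact (IsEmpty.false x).elim
    rw [Nat.card_eq_fintype_card, this]
    omega
  have hsplit : ∑ q ∈ Finset.univ \ A, Fintype.card {x // f x = q}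
      + ∑ q ∈ A, Fintype.card {x // f x = q} = ∑ q : Q, Fintype.card {x // f x = q} :=
    Finset.sum_sdiff (Finset.filter_subset _ _)
  have h1 : A.card ≤ ∑ q ∈ A, Fintype.card {x // f x = q} := by
    calc A.card = ∑ _q ∈ A, 1 := by simp
      _ ≤ _ := Finset.sum_le_sum (fun q _ => hpos q)
  have h2 : 2 * (Finset.univ \ A).card ≤ ∑ q ∈ Finset.univ \ A, Fintype.card {x // f x = q} := by
    calc 2 * (Finset.univ \ A).card = ∑ _q ∈ Finset.univ \ A, 2 := by
          rw [Finset.sum_const]; ring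
      _ ≤ _ := Finset.sum_le_sum hbig
  have hQcard : (Finset.univ \ A).card + A.card = Fintype.card Q := by
    rw [Finset.card_sdiff_add_card_eq_card (Finset.filter_subset _ _), Finset.card_univ]
  -- every singleton class consists of a fixed point
  have hAfix : A.card ≤ {x : X | g x = x}.ncard := by
    have hchoice : ∀ q ∈ A, ∃ x : X, f x = q ∧ g x = x := by
      intro q hq
      simp only [hA, Finset.mem_filter, Finset.mem_univ, true_and] at hq
      obtain ⟨⟨x, hx⟩, huniq⟩ := Fintype.card_eq_one_iff.1 hq
      refine ⟨x, hx, ?_⟩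
      have hgx : f (g x) = q := by
        rw [← hx]
        exact Quotient.sound ⟨-1, by simp⟩
      have := huniq ⟨g x, hgx⟩
      exact congrArg Subtype.val this
    choose w hw1 hw2 using hchoice
    set wf : Q → X := fun q => if h : q ∈ A then w q h else Classical.arbitrary X with hwf
    rw [Set.ncard_eq_toFinset_card _ (Set.toFinite _)]
    apply Finset.card_le_card_of_injOn wf
    · intro q hq
      rw [Finset.mem_coe] at hq ⊢
      rw [Set.Finite.mem_toFinset]
      simp only [hwf, dif_pos hq]
      exact hw2 q hq
    · intro q1 hq1 q2 hq2 hEq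
      rw [Finset.mem_coe] at hq1 hq2
      simp only [hwf, dif_pos hq1, dif_pos hq2] at hEq
      rw [← hw1 q1 hq1, ← hw1 q2 hq2, hEq]
  have hcard' := hcard
  rw [Nat.card_eq_fintype_card]
  omega

lemma ncard_biUnion_le' {α β : Type*} [Finite β] (s : Finset α) (f : α → Set β) :
    (⋃ a ∈ s, f a).ncard ≤ ∑ a ∈ s, (f a).ncard := by
  classical
  induction s using Finset.induction_on with
  | empty => simp
  | insert _ _ hnotmem ih =>
    rename_i a s
    rw [Finset.set_biUnion_insert, Finset.sum_insert hnotmem]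
    exact le_trans (Set.ncard_union_le _ _) (by omega)

end Count
section Extract
open Set
set_option linter.unusedSectionVars false

lemma coe_inv_perm {X : Type} {K : Subgroup (Equiv.Perm X)} (g : ↥K) :
    ((g⁻¹ : ↥K) : Equiv.Perm X) = ((g : Equiv.Perm X))⁻¹ := rfl

lemma SEq_symm {X : Type} (K : Subgroup (Equiv.Perm X)) {A B : Set X} (h : SEq K A B) :
    SEq K B A := by
  obtain ⟨g, rfl⟩ := h
  refine ⟨g⁻¹, ?_⟩
  rw [coe_inv_perm, ← Set.image_comp]
  simp

lemma nat_key : ∀ L : ℕ, 9 ≤ L → (L + 1) * (L + 1) + 11 ≤ 2 ^ (L - 2) := by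
  intro L
  induction L with
  | zero => omega
  | succ L ih =>
    intro hL
    rcases Nat.lt_or_ge L 9 with h | h
    · have hL8 : L = 8 := by omega
      subst hL8
      norm_num
    · have h1 := ih h
      have h2 : 2 ^ (L + 1 - 2) = 2 * 2 ^ (L - 2) := by
        rw [← pow_succ']
        congr 1
        omega
      nlinarith

lemma extract_reps {X : Type} [Fintype X] (K : Subgroup (Equiv.Perm X)) (GoodS : Set (Set X))
    (hbig : 511 * Nat.card ↥K < GoodS.ncard) :
    ∃ R : Fin 512 → Set X, (∀ j, R j ∈ GoodS) ∧ (∀ i j, i ≠ j → ¬ SEq K (R i) (R j)) := by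
  classical
  have hcl : ∀ Γ : Set X, {Δ : Set X | SEq K Γ Δ}.ncard ≤ Nat.card ↥K := by
    intro Γ
    have h1 : {Δ : Set X | SEq K Γ Δ} = (fun g : ↥K => (g : Equiv.Perm X) '' Γ) '' Set.univ := by
      ext Δ
      simp only [Set.mem_setOf_eq, Set.image_univ, Set.mem_range]
      rfl
    rw [h1]
    calc ((fun g : ↥K => (g : Equiv.Perm X) '' Γ) '' Set.univ).ncard
        ≤ (Set.univ : Set ↥K).ncard := Set.ncard_image_le Set.finite_univ
      _ = Nat.card ↥K := Set.ncard_univ _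
  have main : ∀ jj : ℕ, jj ≤ 512 → ∃ R : Fin jj → Set X,
      (∀ i, R i ∈ GoodS) ∧ (∀ i i', i ≠ i' → ¬ SEq K (R i) (R i')) := by
    intro jj
    induction jj with
    | zero => exact fun _ => ⟨Fin.elim0, fun i => i.elim0, fun i => i.elim0⟩
    | succ jj ih =>
      intro hjj
      obtain ⟨R, hR1, hR2⟩ := ih (by omega)
      set U := ⋃ i ∈ (Finset.univ : Finset (Fin jj)), {Δ : Set X | SEq K (R i) Δ} with hU
      have hUcard : U.ncard ≤ jj * Nat.card ↥K := by
        calc U.ncard ≤ ∑ i ∈ (Finset.univ : Finset (Fin jj)), {Δ : Set X | SEq K (R i) Δ}.ncard :=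
              ncard_biUnion_le' _ _
          _ ≤ ∑ _i ∈ (Finset.univ : Finset (Fin jj)), Nat.card ↥K :=
              Finset.sum_le_sum (fun i _ => hcl (R i))
          _ = jj * Nat.card ↥K := by
              rw [Finset.sum_const, Finset.card_univ, Fintype.card_fin, smul_eq_mul]
      have hlt : U.ncard < GoodS.ncard := by
        have : jj * Nat.card ↥K ≤ 511 * Nat.card ↥K := by
          apply Nat.mul_le_mul_right
          omega
        omega
      obtain ⟨Γ, hΓG, hΓU⟩ := Set.exists_mem_notMem_of_ncard_lt_ncard hlt (Set.toFinite _)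
      have hΓnotin : ∀ i : Fin jj, ¬ SEq K (R i) Γ := by
        intro i hSE
        exact hΓU (Set.mem_biUnion (Finset.mem_univ i) hSE)
      refine ⟨Fin.snoc R Γ, ?_, ?_⟩
      · intro i
        induction i using Fin.lastCases with
        | last => rwa [Fin.snoc_last]
        | cast k =>
          rw [Fin.snoc_castSucc]
          exact hR1 k
      · intro i i' hne
        induction i using Fin.lastCases with
        | last =>
          induction i' using Fin.lastCases with
          | last => exact absurd rfl hne
          | cast k =>
            rw [Fin.snoc_last, Fin.snoc_castSucc]
            intro hSE
            exact hΓnotin k (SEq_symm K hSE)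
        | cast k =>
          induction i' using Fin.lastCases with
          | last =>
            rw [Fin.snoc_last, Fin.snoc_castSucc]
            exact hΓnotin k
          | cast k' =>
            rw [Fin.snoc_castSucc, Fin.snoc_castSucc]
            apply hR2
            intro hkk
            exact hne (by rw [hkk])
  obtain ⟨R, h1, h2⟩ := main 512 le_rfl
  exact ⟨R, h1, h2⟩

end Extract
section PrimSupply
open Set Equiv
set_option linter.unusedSectionVars false
set_option maxHeartbeats 1000000

lemma coe_mul_perm {X : Type} {K : Subgroup (Equiv.Perm X)} (g h : ↥K) :
    ((g * h : ↥K) : Equiv.Perm X) = (g : Equiv.Perm X) * (h : Equiv.Perm X) := rfl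

lemma primitive_supply {X : Type} [Fintype X] (K : Subgroup (Equiv.Perm X))
    (hsolv : IsSolvable ↥K) (htrans : KTrans K)
    (hprim : ∀ s : Setoid X, IsInv K s → s = ⊥ ∨ s = ⊤)
    (hm : 512 ≤ Fintype.card X) :
    ∃ R : Fin 512 → Set X,
      (∀ j (g : ↥K), (g : Equiv.Perm X) '' (R j) = R j → g = 1) ∧
      (∀ i j, i ≠ j → ¬ SEq K (R i) (R j)) := by
  classical
  set m := Fintype.card X with hmdef
  have hm2 : 2 ≤ m := by omega
  have hmpos : 0 < m := by omega
  have hXne : Nonempty X := Fintype.card_pos_iff.1 (by omega)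
  obtain ⟨x₀⟩ := hXne
  -- minimal normal subgroup
  obtain ⟨M, hMnorm, hMbot, hMmin⟩ := exists_minimal_normal (ktop_ne_bot htrans hm2)
  haveI := hMnorm
  -- abelian
  have habel : ⁅M, M⁆ = ⊥ := by
    by_contra hMM
    have hle : ⁅M, M⁆ ≤ M := Subgroup.commutator_le_right M M
    have heq : ⁅M, M⁆ = M := hMmin _ (Subgroup.commutator_normal M M) hMM hle
    exact @not_perfect_of_solvable _ _ hsolv M hMbot heq
  have hcomm : ∀ a b : ↥K, a ∈ M → b ∈ M → a * b = b * a :=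
    fun a b ha hb => mul_comm_of_commutator_bot habel ha hb
  have htransM : ∀ x y : X, ∃ mm : ↥K, mm ∈ M ∧ (mm : Equiv.Perm X) x = y :=
    normal_transitive hprim M hMbot
  -- regularity
  have hreg : ∀ mm : ↥K, mm ∈ M → (∃ x : X, (mm : Equiv.Perm X) x = x) → mm = 1 := by
    rintro mm hmm ⟨x, hx⟩
    have hall : ∀ y : X, (mm : Equiv.Perm X) y = y := by
      intro y
      obtain ⟨m', hm', rfl⟩ := htransM x y
      have : mm * m' = m' * mm := hcomm mm m' hmm hm'
      calc (mm : Equiv.Perm X) ((m' : Equiv.Perm X) x)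
          = ((mm * m' : ↥K) : Equiv.Perm X) x := rfl
        _ = ((m' * mm : ↥K) : Equiv.Perm X) x := by rw [this]
        _ = (m' : Equiv.Perm X) ((mm : Equiv.Perm X) x) := rfl
        _ = (m' : Equiv.Perm X) x := by rw [hx]
    exact Subtype.ext (Equiv.ext hall)
  -- |M| = m via the bijection mm ↦ mm x₀
  have cardM : Nat.card ↥M = m := by
    have hbij : Function.Bijective (fun mm : ↥M => ((mm : ↥K) : Equiv.Perm X) x₀) := by
      constructor
      · intro a b hab
        simp only at hab
        have h1 : ((b : ↥K)⁻¹ * (a : ↥K) : ↥K) ∈ M := M.mul_mem (M.inv_mem b.2) a.2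
        have h2 : (((b : ↥K)⁻¹ * (a : ↥K) : ↥K) : Equiv.Perm X) x₀ = x₀ := by
          rw [coe_mul_perm, Equiv.Perm.mul_apply, hab, coe_inv_perm]
          simp
        have := hreg _ h1 ⟨x₀, h2⟩
        have hba : (a : ↥K) = (b : ↥K) := by
          have h3 := congrArg (fun z => (b : ↥K) * z) this
          simp only [mul_one] at h3
          rw [← mul_assoc] at h3
          simpa using h3
        exact Subtype.ext hba
      · intro y
        obtain ⟨mm, hmm, hy⟩ := htransM x₀ y
        exact ⟨⟨mm, hmm⟩, hy⟩
    rw [Nat.card_eq_of_bijective _ hbij, Nat.card_eq_fintype_card]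
  -- fixed points bound
  have hfix : ∀ g : ↥K, g ≠ 1 → ({x : X | (g : Equiv.Perm X) x = x}).ncard ≤ m / 2 := by
    intro g hg
    by_cases hex : ∃ x : X, (g : Equiv.Perm X) x = x
    · obtain ⟨x₁, hx₁⟩ := hex
      set C : Subgroup ↥K := M ⊓ Subgroup.centralizer {g} with hC
      have hCM : C ≤ M := inf_le_left
      have hCne : C ≠ M := by
        intro hEq
        apply hg
        have hallcomm : ∀ mm : ↥K, mm ∈ M → g * mm = mm * g := by
          intro mm hmm
          have : mm ∈ C := hEq ▸ hmm
          have h2 : mm ∈ Subgroup.centralizer {g} := this.2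
          rw [Subgroup.mem_centralizer_iff] at h2
          exact h2 g rfl
        have hally : ∀ y : X, (g : Equiv.Perm X) y = y := by
          intro y
          obtain ⟨mm, hmm, rfl⟩ := htransM x₁ y
          calc (g : Equiv.Perm X) ((mm : Equiv.Perm X) x₁)
              = ((g * mm : ↥K) : Equiv.Perm X) x₁ := rfl
            _ = ((mm * g : ↥K) : Equiv.Perm X) x₁ := by rw [hallcomm mm hmm]
            _ = (mm : Equiv.Perm X) ((g : Equiv.Perm X) x₁) := rfl
            _ = (mm : Equiv.Perm X) x₁ := by rw [hx₁]
        exact Subtype.ext (Equiv.ext hally)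
      have hsub : {x : X | (g : Equiv.Perm X) x = x}
          ⊆ (fun mm : ↥K => (mm : Equiv.Perm X) x₁) '' (C : Set ↥K) := by
        intro y hy
        simp only [Set.mem_setOf_eq] at hy
        obtain ⟨mm, hmm, rfl⟩ := htransM x₁ y
        have hc : g * mm * g⁻¹ ∈ M := hMnorm.conj_mem mm hmm g
        have hfixc : ((mm⁻¹ * (g * mm * g⁻¹) : ↥K) : Equiv.Perm X) x₁ = x₁ := by
          have hginv : ((g⁻¹ : ↥K) : Equiv.Perm X) x₁ = x₁ := by
            rw [coe_inv_perm]
            exact Equiv.Perm.inv_eq_iff_eq.2 hx₁.symm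
          have : ((g * mm * g⁻¹ : ↥K) : Equiv.Perm X) x₁ = (mm : Equiv.Perm X) x₁ := by
            rw [coe_mul_perm, coe_mul_perm]
            simp only [Equiv.Perm.mul_apply]
            rw [hginv, hy]
          rw [coe_mul_perm, Equiv.Perm.mul_apply, this, coe_inv_perm]
          simp
        have h1 : mm⁻¹ * (g * mm * g⁻¹) ∈ M := M.mul_mem (M.inv_mem hmm) hc
        have := hreg _ h1 ⟨x₁, hfixc⟩
        have hconj : g * mm * g⁻¹ = mm := by
          have h4 := congrArg (fun z => mm * z) this
          simp only [mul_one] at h4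
          rw [← mul_assoc] at h4
          simp only [mul_inv_cancel, one_mul] at h4
          exact h4
        have hcent : mm ∈ Subgroup.centralizer {g} := by
          rw [Subgroup.mem_centralizer_iff]
          intro h hh
          rw [Set.mem_singleton_iff] at hh
          subst hh
          calc h * mm = (h * mm * h⁻¹) * h := by group
            _ = mm * h := by rw [hconj]
        exact ⟨mm, ⟨hmm, hcent⟩, rfl⟩
      have hlt : C < M := lt_of_le_of_ne hCM hCne
      have h2C : 2 * Nat.card ↥C ≤ m := by
        have := two_mul_card_le_of_lt hlt
        omega
      calc ({x : X | (g : Equiv.Perm X) x = x}).ncard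
          ≤ ((fun mm : ↥K => (mm : Equiv.Perm X) x₁) '' (C : Set ↥K)).ncard :=
            Set.ncard_le_ncard hsub (Set.toFinite _)
        _ ≤ (C : Set ↥K).ncard := Set.ncard_image_le (Set.toFinite _)
        _ = Nat.card ↥C := by rw [← Nat.card_coe_set_eq, SetLike.coe_sort_coe]
        _ ≤ m / 2 := by omega
    · push_neg at hex
      have : {x : X | (g : Equiv.Perm X) x = x} = ∅ := by
        ext x; simpa using hex x
      rw [this]
      simp
  -- stabilizer bound
  obtain ⟨S, hSgen, hScard⟩ := exists_small_gens M
  have hSsub : ∀ s ∈ S, (s : ↥K) ∈ M := by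
    intro s hs
    rw [← hSgen]
    exact Subgroup.subset_closure hs
  set St : Subgroup ↥K := MulAction.stabilizer ↥K x₀ with hSt
  have hStfix : ∀ g : ↥K, g ∈ St ↔ (g : Equiv.Perm X) x₀ = x₀ := by
    intro g
    rw [MulAction.mem_stabilizer_iff]
    rfl
  have hstab : Nat.card ↥St ≤ m ^ S.card := by
    have hinj : Function.Injective
        (fun (g : ↥St) (s : {x // x ∈ S}) =>
          (⟨(g : ↥K) * (s : ↥K) * (g : ↥K)⁻¹, hMnorm.conj_mem _ (hSsub s s.2) _⟩ : ↥M)) := by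
      intro g g' hgg
      have hcomm' : ∀ s : ↥K, s ∈ S → ((g' : ↥K)⁻¹ * (g : ↥K)) * s = s * ((g' : ↥K)⁻¹ * (g : ↥K)) := by
        intro s hs
        have := congrFun hgg ⟨s, hs⟩
        simp only [Subtype.mk_eq_mk] at this
        have h1 : (g : ↥K) * s * (g : ↥K)⁻¹ = (g' : ↥K) * s * (g' : ↥K)⁻¹ := this
        calc ((g' : ↥K)⁻¹ * (g : ↥K)) * s
            = (g' : ↥K)⁻¹ * ((g : ↥K) * s * (g : ↥K)⁻¹) * (g : ↥K) := by group
          _ = (g' : ↥K)⁻¹ * ((g' : ↥K) * s * (g' : ↥K)⁻¹) * (g : ↥K) := by rw [h1]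
          _ = s * ((g' : ↥K)⁻¹ * (g : ↥K)) := by group
      set h : ↥K := (g' : ↥K)⁻¹ * (g : ↥K) with hh
      have hcentS : ∀ mm : ↥K, mm ∈ M → h * mm = mm * h := by
        have hle : M ≤ Subgroup.centralizer {h} := by
          rw [← hSgen]
          apply (Subgroup.closure_le _).2
          intro s hs
          rw [SetLike.mem_coe, Subgroup.mem_centralizer_iff]
          intro z hz
          rw [Set.mem_singleton_iff] at hz
          subst hz
          exact hcomm' s hs
        intro mm hmm
        have := hle hmm
        rw [Subgroup.mem_centralizer_iff] at this
        exact this h rfl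
      have hfixh : (h : Equiv.Perm X) x₀ = x₀ := by
        have h1 := (hStfix (g : ↥K)).1 g.2
        have h2 := (hStfix (g' : ↥K)).1 g'.2
        rw [hh, coe_mul_perm, Equiv.Perm.mul_apply, h1, coe_inv_perm]
        exact Equiv.Perm.inv_eq_iff_eq.2 h2.symm
      have hally : ∀ y : X, (h : Equiv.Perm X) y = y := by
        intro y
        obtain ⟨mm, hmm, rfl⟩ := htransM x₀ y
        calc (h : Equiv.Perm X) ((mm : Equiv.Perm X) x₀)
            = ((h * mm : ↥K) : Equiv.Perm X) x₀ := rfl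
          _ = ((mm * h : ↥K) : Equiv.Perm X) x₀ := by rw [hcentS mm hmm]
          _ = (mm : Equiv.Perm X) ((h : Equiv.Perm X) x₀) := rfl
          _ = (mm : Equiv.Perm X) x₀ := by rw [hfixh]
      have h1 : h = 1 := Subtype.ext (Equiv.ext hally)
      have h5 : (g : ↥K) = (g' : ↥K) := by
        have h6 := congrArg (fun z => (g' : ↥K) * z) h1
        simpa [hh, mul_assoc] using h6
      exact Subtype.ext h5
    calc Nat.card ↥St ≤ Nat.card ({x // x ∈ S} → ↥M) := Nat.card_le_card_of_injective _ hinj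
      _ = Nat.card ↥M ^ Nat.card {x // x ∈ S} := Nat.card_fun
      _ = m ^ S.card := by rw [cardM, Nat.card_eq_fintype_card, Fintype.card_coe]
  -- orbit stabilizer
  haveI : MulAction.IsPretransitive ↥K X := ⟨fun x y => (htrans x y).imp (fun g hg => hg)⟩
  have horbst : Nat.card ↥K = m * Nat.card ↥St := by
    letI : Fintype ↥K := Fintype.ofFinite _
    letI : Fintype ↥(MulAction.orbit ↥K x₀) := Fintype.ofFinite _
    letI : Fintype ↥St := Fintype.ofFinite _
    have := MulAction.card_orbit_mul_card_stabilizer_eq_card_group ↥K x₀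
    have horb : Fintype.card ↥(MulAction.orbit ↥K x₀) = m := by
      have huniv : MulAction.orbit ↥K x₀ = Set.univ := MulAction.orbit_eq_univ ↥K x₀
      rw [← Nat.card_eq_fintype_card, huniv]
      calc Nat.card ↥(Set.univ : Set X) = (Set.univ : Set X).ncard :=
            Nat.card_coe_set_eq _
        _ = Nat.card X := Set.ncard_univ X
        _ = Fintype.card X := Nat.card_eq_fintype_card
        _ = m := hmdef.symm
    rw [horb] at this
    rw [Nat.card_eq_fintype_card, Nat.card_eq_fintype_card, ← this]
  -- numerics
  set L := Nat.log 2 m with hL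
  have hscardL : S.card ≤ L := by
    rw [Nat.le_log_iff_pow_le (by norm_num) (by omega : m ≠ 0)]
    exact hScard.trans cardM.le
  have hL9 : 9 ≤ L := by
    rw [Nat.le_log_iff_pow_le (by norm_num) (by omega : m ≠ 0)]
    calc (2 : ℕ) ^ 9 = 512 := by norm_num
      _ ≤ m := hm
  have hmle : m ≤ 2 ^ (L + 1) := (Nat.lt_pow_succ_log_self (by norm_num) m).le
  have h2Lm : 2 ^ L ≤ m := Nat.pow_log_le_self 2 (by omega)
  have hKbound : Nat.card ↥K ≤ 2 ^ ((L + 1) * (L + 1)) := by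
    calc Nat.card ↥K = m * Nat.card ↥St := horbst
      _ ≤ m * m ^ S.card := Nat.mul_le_mul_left m hstab
      _ = m ^ (S.card + 1) := by rw [pow_succ, mul_comm]
      _ ≤ m ^ (L + 1) := Nat.pow_le_pow_right (by omega) (by omega)
      _ ≤ (2 ^ (L + 1)) ^ (L + 1) := Nat.pow_le_pow_left hmle _
      _ = 2 ^ ((L + 1) * (L + 1)) := by rw [← pow_mul]
  have hkey : (L + 1) * (L + 1) + 11 ≤ m / 4 := by
    have h1 := nat_key L hL9
    have h2 : 2 ^ (L - 2) ≤ m / 4 := by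
      have h3 : 2 ^ L = 4 * 2 ^ (L - 2) := by
        have h4 : 2 ^ (L - 2) * 2 ^ 2 = 2 ^ L := by
          rw [← pow_add]
          congr 1
          omega
        omega
      have := Nat.div_le_div_right (c := 4) h2Lm
      rw [h3] at this
      omega
    omega
  have hKsmall : Nat.card ↥K ≤ 2 ^ (m / 4 - 11) := by
    calc Nat.card ↥K ≤ 2 ^ ((L + 1) * (L + 1)) := hKbound
      _ ≤ 2 ^ (m / 4 - 11) := Nat.pow_le_pow_right (by norm_num) (by omega)
  -- counting bad subsets
  set F := (m + m / 2) / 2 with hF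
  have hperg : ∀ g : ↥K, g ≠ 1 → {Γ : Set X | (g : Equiv.Perm X) '' Γ = Γ}.ncard ≤ 2 ^ F := by
    intro g hg
    have h1 := invariant_count (X := X) (g : Equiv.Perm X)
    have h2 := orbcount (X := X) (g : Equiv.Perm X)
    have h3 := hfix g hg
    have h4 : Nat.card (Quotient (zsetoid (g : Equiv.Perm X))) ≤ F := by omega
    calc {Γ : Set X | (g : Equiv.Perm X) '' Γ = Γ}.ncard
        ≤ 2 ^ Nat.card (Quotient (zsetoid (g : Equiv.Perm X))) := h1
      _ ≤ 2 ^ F := Nat.pow_le_pow_right (by norm_num) h4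
  letI : Fintype ↥K := Fintype.ofFinite _
  set Bad : Set (Set X) := ⋃ g ∈ (Finset.univ : Finset ↥K).erase 1,
    {Γ : Set X | (g : Equiv.Perm X) '' Γ = Γ} with hBad
  have hBadCard : Bad.ncard ≤ Nat.card ↥K * 2 ^ F := by
    calc Bad.ncard ≤ ∑ g ∈ (Finset.univ : Finset ↥K).erase 1,
          {Γ : Set X | (g : Equiv.Perm X) '' Γ = Γ}.ncard := ncard_biUnion_le' _ _
      _ ≤ ∑ _g ∈ (Finset.univ : Finset ↥K).erase 1, 2 ^ F := by
          apply Finset.sum_le_sum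
          intro g hgmem
          exact hperg g (Finset.ne_of_mem_erase hgmem)
      _ = ((Finset.univ : Finset ↥K).erase 1).card * 2 ^ F := by
          rw [Finset.sum_const, smul_eq_mul]
      _ ≤ Nat.card ↥K * 2 ^ F := by
          apply Nat.mul_le_mul_right
          rw [Nat.card_eq_fintype_card, ← Finset.card_univ]
          exact Finset.card_le_card (Finset.erase_subset _ _)
  -- the good subsets
  set GoodS : Set (Set X) := {Γ : Set X | ∀ g : ↥K, (g : Equiv.Perm X) '' Γ = Γ → g = 1} with hGoodS
  have hcompl : Set.univ \ Bad ⊆ GoodS := by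
    intro Γ hΓ
    intro g hgΓ
    by_contra hg1
    apply hΓ.2
    rw [hBad]
    apply Set.mem_biUnion (Finset.mem_erase.2 ⟨hg1, Finset.mem_univ g⟩) hgΓ
  have htotal : (Set.univ : Set (Set X)).ncard = 2 ^ m := by
    rw [Set.ncard_univ, Nat.card_eq_fintype_card, Fintype.card_set, hmdef]
  have hGoodBig : 511 * Nat.card ↥K < GoodS.ncard := by
    have hdiff : (Set.univ \ Bad).ncard = 2 ^ m - Bad.ncard := by
      rw [Set.ncard_diff (Set.subset_univ _) (Set.toFinite _), htotal]
    have hmono : (Set.univ \ Bad).ncard ≤ GoodS.ncard :=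
      Set.ncard_le_ncard hcompl (Set.toFinite _)
    -- arithmetic: 511·|K| + |K|·2^F < 2^m
    have hFb : F ≤ m - m / 4 := by omega
    have harith : 511 * Nat.card ↥K + Nat.card ↥K * 2 ^ F < 2 ^ m := by
      have e1 : 511 * Nat.card ↥K ≤ 2 ^ 9 * 2 ^ (m / 4 - 11) := by
        apply Nat.mul_le_mul _ hKsmall
        norm_num
      have e1' : (2 : ℕ) ^ 9 * 2 ^ (m / 4 - 11) = 2 ^ (m / 4 - 2) := by
        rw [← pow_add]
        congr 1
        omega
      have e2 : Nat.card ↥K * 2 ^ F ≤ 2 ^ (m / 4 - 11) * 2 ^ (m - m / 4) := by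
        apply Nat.mul_le_mul hKsmall
        exact Nat.pow_le_pow_right (by norm_num) hFb
      have e2' : (2 : ℕ) ^ (m / 4 - 11) * 2 ^ (m - m / 4) = 2 ^ (m - 11) := by
        rw [← pow_add]
        congr 1
        omega
      have e3 : (2 : ℕ) ^ (m / 4 - 2) + 2 ^ (m - 11) ≤ 2 ^ (m - 2) + 2 ^ (m - 2) := by
        have e3a : (2 : ℕ) ^ (m / 4 - 2) ≤ 2 ^ (m - 2) :=
          Nat.pow_le_pow_right (by norm_num) (by omega)
        have e3b : (2 : ℕ) ^ (m - 11) ≤ 2 ^ (m - 2) :=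
          Nat.pow_le_pow_right (by norm_num) (by omega)
        omega
      have e4 : (2 : ℕ) ^ (m - 2) + 2 ^ (m - 2) < 2 ^ m := by
        have h5 : (2 : ℕ) ^ m = 4 * 2 ^ (m - 2) := by
          have h7 : 2 ^ (m - 2) * 2 ^ 2 = 2 ^ m := by
            rw [← pow_add]
            congr 1
            omega
          omega
        have h6 : 0 < (2 : ℕ) ^ (m - 2) := Nat.pow_pos (by norm_num)
        omega
      omega
    omega
  obtain ⟨R, hR1, hR2⟩ := extract_reps K GoodS hGoodBig
  exact ⟨R, fun j g => hR1 j g, hR2⟩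

end PrimSupply
section Window

lemma window_eq {m : ℕ} (hm0 : 0 < m) (hm : m ≤ 511) {j k : ℕ} (hj : j < 512) (hk : k < 512)
    (H : ∀ a : ℕ, a < m → ∃ a' : ℕ, a' < m ∧ (a + j) % 512 = (a' + k) % 512)
    (H' : ∀ a : ℕ, a < m → ∃ a' : ℕ, a' < m ∧ (a + k) % 512 = (a' + j) % 512) :
    j = k := by
  obtain ⟨a1, ha1, e1⟩ := H 0 hm0
  rcases Nat.eq_zero_or_pos a1 with h0 | hpos
  · subst h0
    omega
  · exfalso
    have hnb : ∀ a : ℕ, a < m → ((j + 511) % 512) ≠ (a + k) % 512 := by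
      intro a ha heq
      obtain ⟨a', ha', e2⟩ := H' a ha
      omega
    exact hnb (a1 - 1) (by omega) (by omega)

end Window

section Decor
set_option linter.unusedSectionVars false
open Set Equiv

variable {Ω : Type} [Fintype Ω] {G : Subgroup (Equiv.Perm Ω)} {r : Setoid Ω}

/-- The stabilizer in `G` of the block `σ₀`. -/
def blockStab (hinv : IsInv G r) (σ₀ : Quotient r) : Subgroup ↥G where
  carrier := {g : ↥G | quotHom hinv g σ₀ = σ₀}
  one_mem' := by simp
  mul_mem' := by
    intro a b ha hb
    simp only [Set.mem_setOf_eq, map_mul, Equiv.Perm.mul_apply] at *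
    rw [hb, ha]
  inv_mem' := by
    intro a ha
    simp only [Set.mem_setOf_eq, map_inv] at *
    exact Equiv.Perm.inv_eq_iff_eq.2 ha.symm

lemma mem_blockStab {hinv : IsInv G r} {σ₀ : Quotient r} (g : ↥G) :
    g ∈ blockStab hinv σ₀ ↔ quotHom hinv g σ₀ = σ₀ := Iff.rfl

lemma blockStab_iff (hinv : IsInv G r) {σ₀ : Quotient r} (g : ↥(blockStab hinv σ₀)) :
    ∀ x : Ω, Quotient.mk r x = σ₀ ↔ Quotient.mk r (((g : ↥G) : Equiv.Perm Ω) x) = σ₀ := by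
  intro x
  have h1 : Quotient.mk r (((g : ↥G) : Equiv.Perm Ω) x)
      = quotHom hinv (g : ↥G) (Quotient.mk r x) := rfl
  rw [h1]
  constructor
  · intro h
    rw [h]
    exact g.2
  · intro h
    have hg2 : quotHom hinv (g : ↥G) σ₀ = σ₀ := g.2
    exact (quotHom hinv (g : ↥G)).injective (h.trans hg2.symm)

/-- Restriction of block-stabilizing elements to the block. -/
def resHom (hinv : IsInv G r) (σ₀ : Quotient r) :
    ↥(blockStab hinv σ₀) →* Equiv.Perm {x : Ω // Quotient.mk r x = σ₀} where
  toFun g := Equiv.Perm.subtypePerm ((g : ↥G) : Equiv.Perm Ω) (fun x => (blockStab_iff hinv g x).symm)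
  map_one' := by
    ext x
    simp [Equiv.Perm.subtypePerm_apply]
  map_mul' g h := by
    ext x
    simp [Equiv.Perm.subtypePerm_apply]
    rfl

lemma resHom_apply (hinv : IsInv G r) (σ₀ : Quotient r) (g : ↥(blockStab hinv σ₀))
    (x : {x : Ω // Quotient.mk r x = σ₀}) :
    ((resHom hinv σ₀ g x : {x : Ω // Quotient.mk r x = σ₀}) : Ω)
      = ((g : ↥G) : Equiv.Perm Ω) (x : Ω) := rfl

end Decor
section Decor2
set_option linter.unusedSectionVars false
set_option maxHeartbeats 1000000
open Set Equiv

variable {Ω : Type} [Fintype Ω] {G : Subgroup (Equiv.Perm Ω)} {r : Setoid Ω}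

lemma perm_image_mem_iff {α : Type*} (p : Equiv.Perm α) {A B : Set α} (h : p '' A = B) (z : α) :
    p z ∈ B ↔ z ∈ A := by
  subst h
  constructor
  · rintro ⟨w, hw, he⟩
    rwa [← p.injective he]
  · intro hz
    exact ⟨z, hz, rfl⟩

variable (hinv : IsInv G r) {x₀ : Ω}

lemma u_pf (σ₀ : Quotient r) (u : Quotient r → ↥G)
    (hu : ∀ σ, quotHom hinv (u σ) σ₀ = σ) (x : Ω) :
    Quotient.mk r ((((u (Quotient.mk r x))⁻¹ : ↥G) : Equiv.Perm Ω) x) = σ₀ := by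
  have h1 : Quotient.mk r ((((u (Quotient.mk r x))⁻¹ : ↥G) : Equiv.Perm Ω) x)
      = quotHom hinv (u (Quotient.mk r x))⁻¹ (Quotient.mk r x) := rfl
  rw [h1, map_inv]
  exact Equiv.Perm.inv_eq_iff_eq.2 (hu _).symm

variable (σ₀ : Quotient r) (u : Quotient r → ↥G) (hu : ∀ σ, quotHom hinv (u σ) σ₀ = σ)
  {N : ℕ} (TT : Fin N → Set {x : Ω // Quotient.mk r x = σ₀})

/-- The subset of `Ω` obtained by decorating each block according to the coloring `c`. -/
def ΔOf (c : Quotient r → Fin N) : Set Ω :=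
  {x : Ω | (⟨_, u_pf hinv σ₀ u hu x⟩ : {y : Ω // Quotient.mk r y = σ₀})
    ∈ TT (c (Quotient.mk r x))}

lemma mem_ΔOf_iff (c : Quotient r → Fin N) (x : Ω) (σ : Quotient r)
    (hx : Quotient.mk r x = σ) (pf : Quotient.mk r ((((u σ)⁻¹ : ↥G) : Equiv.Perm Ω) x) = σ₀) :
    x ∈ ΔOf hinv σ₀ u hu TT c
      ↔ (⟨_, pf⟩ : {y : Ω // Quotient.mk r y = σ₀}) ∈ TT (c σ) := by
  subst hx
  rfl

lemma mem_transfer (c : Quotient r → Fin N) (σ : Quotient r)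
    (y : {x : Ω // Quotient.mk r x = σ₀}) :
    ((u σ : ↥G) : Equiv.Perm Ω) (y : Ω) ∈ ΔOf hinv σ₀ u hu TT c ↔ y ∈ TT (c σ) := by
  have hmk : Quotient.mk r (((u σ : ↥G) : Equiv.Perm Ω) (y : Ω)) = σ := by
    have h1 : Quotient.mk r (((u σ : ↥G) : Equiv.Perm Ω) (y : Ω))
        = quotHom hinv (u σ) (Quotient.mk r (y : Ω)) := rfl
    rw [h1, y.2, hu]
  have pf : Quotient.mk r ((((u σ)⁻¹ : ↥G) : Equiv.Perm Ω)
      (((u σ : ↥G) : Equiv.Perm Ω) (y : Ω))) = σ₀ := by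
    rw [coe_inv_perm]
    simp only [Equiv.Perm.inv_def, Equiv.symm_apply_apply]
    exact y.2
  rw [mem_ΔOf_iff hinv σ₀ u hu TT c _ σ hmk pf]
  have heq : (⟨_, pf⟩ : {y : Ω // Quotient.mk r y = σ₀}) = y := by
    apply Subtype.ext
    show (((u σ)⁻¹ : ↥G) : Equiv.Perm Ω) (((u σ : ↥G) : Equiv.Perm Ω) (y : Ω)) = (y : Ω)
    rw [coe_inv_perm]
    simp
  rw [heq]

/-- The canonical element carrying the block `σ` to the block `φ g σ`. -/
def hElem (g : ↥G) (σ : Quotient r) : ↥G := (u (quotHom hinv g σ))⁻¹ * g * (u σ)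

lemma hElem_mem (hu' : ∀ σ, quotHom hinv (u σ) σ₀ = σ) (g : ↥G) (σ : Quotient r) :
    hElem hinv u g σ ∈ blockStab hinv σ₀ := by
  rw [mem_blockStab]
  simp only [hElem, map_mul, map_inv, Equiv.Perm.mul_apply]
  rw [hu' σ]
  exact Equiv.Perm.inv_eq_iff_eq.2 (hu' _).symm

lemma decor_key (c c' : Quotient r → Fin N) (g : ↥G)
    (hg : (g : Equiv.Perm Ω) '' ΔOf hinv σ₀ u hu TT c = ΔOf hinv σ₀ u hu TT c')
    (σ : Quotient r) :
    (resHom hinv σ₀ ⟨hElem hinv u g σ, hElem_mem hinv σ₀ u hu g σ⟩) '' TT (c σ)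
      = TT (c' (quotHom hinv g σ)) := by
  apply perm_image_eq_of_iff
  intro y
  set σ' := quotHom hinv g σ with hσ'
  have hval : ((u σ' : ↥G) : Equiv.Perm Ω)
      ((resHom hinv σ₀ ⟨hElem hinv u g σ, hElem_mem hinv σ₀ u hu g σ⟩ y : _) : Ω)
      = (g : Equiv.Perm Ω) (((u σ : ↥G) : Equiv.Perm Ω) (y : Ω)) := by
    rw [resHom_apply]
    show ((u σ' : ↥G) : Equiv.Perm Ω) (((hElem hinv u g σ : ↥G) : Equiv.Perm Ω) (y : Ω)) = _
    simp only [hElem, coe_mul_perm, coe_inv_perm, Equiv.Perm.mul_apply]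
    rw [← hσ']
    simp
  constructor
  · intro hy
    have h2 := (mem_transfer hinv σ₀ u hu TT c' σ' _).2 hy
    rw [hval] at h2
    have h3 := (perm_image_mem_iff (g : Equiv.Perm Ω) hg _).1 h2
    exact (mem_transfer hinv σ₀ u hu TT c σ y).1 h3
  · intro hy
    have h3 := (mem_transfer hinv σ₀ u hu TT c σ y).2 hy
    have h2 := (perm_image_mem_iff (g : Equiv.Perm Ω) hg _).2 h3
    rw [← hval] at h2
    exact (mem_transfer hinv σ₀ u hu TT c' σ' _).1 h2

end Decor2
section Decor3
set_option linter.unusedSectionVars false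
set_option maxHeartbeats 1000000
open Set Equiv

variable {Ω : Type} [Fintype Ω] {G : Subgroup (Equiv.Perm Ω)} {r : Setoid Ω}

lemma decor_good (hinv : IsInv G r) (σ₀ : Quotient r) (u : Quotient r → ↥G)
    (hu : ∀ σ, quotHom hinv (u σ) σ₀ = σ)
    [Fintype {x : Ω // Quotient.mk r x = σ₀}]
    {N : ℕ} (TT : Fin N → Set {x : Ω // Quotient.mk r x = σ₀}) (c : Quotient r → Fin N)
    (hTgood : ∀ i, Good (resHom hinv σ₀).range (TT i))
    (hc : ∀ g : ↥G, (g : Equiv.Perm Ω) '' ΔOf hinv σ₀ u hu TT c = ΔOf hinv σ₀ u hu TT c →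
      quotHom hinv g = 1) :
    Good G (ΔOf hinv σ₀ u hu TT c) := by
  intro x
  set Δ := ΔOf hinv σ₀ u hu TT c with hΔ
  set σ := Quotient.mk r x with hσ
  have pf0 : Quotient.mk r ((((u σ)⁻¹ : ↥G) : Equiv.Perm Ω) x) = σ₀ := u_pf hinv σ₀ u hu x
  set y₀ : {y : Ω // Quotient.mk r y = σ₀} := ⟨_, pf0⟩ with hy₀
  set Hr := (resHom hinv σ₀).range with hHr
  set OB := MulAction.orbit ↥(setwiseStabilizer Hr (TT (c σ))) y₀ with hOB
  have hmaps : ∀ z ∈ MulAction.orbit ↥(setwiseStabilizer G Δ) x,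
      (((u σ)⁻¹ : ↥G) : Equiv.Perm Ω) z ∈ Subtype.val '' OB := by
    intro z hz
    rw [orbit_sws] at hz
    obtain ⟨k, hk, rfl⟩ := hz
    have φk1 : quotHom hinv k = 1 := hc k hk
    have hσ' : quotHom hinv k σ = σ := by rw [φk1]; rfl
    have key := decor_key hinv σ₀ u hu TT c c k hk σ
    -- the restricted permutation
    set hb := resHom hinv σ₀ ⟨hElem hinv u k σ, hElem_mem hinv σ₀ u hu k σ⟩ with hhb
    have hbstab : hb '' TT (c σ) = TT (c σ) := by
      rw [hhb, key, hσ']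
    have hbmem : hb ∈ Hr := ⟨_, rfl⟩
    set elt : ↥(setwiseStabilizer Hr (TT (c σ))) := ⟨⟨hb, hbmem⟩, hbstab⟩ with helt
    refine ⟨elt • y₀, MulAction.mem_orbit y₀ elt, ?_⟩
    -- value computation
    show ((elt • y₀ : {y : Ω // Quotient.mk r y = σ₀}) : Ω)
        = (((u σ)⁻¹ : ↥G) : Equiv.Perm Ω) ((k : Equiv.Perm Ω) x)
    have h1 : ((elt • y₀ : {y : Ω // Quotient.mk r y = σ₀}) : Ω)
        = (((hElem hinv u k σ : ↥G) : Equiv.Perm Ω)) (y₀ : Ω) := rfl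
    rw [h1]
    have h2 : (y₀ : Ω) = (((u σ)⁻¹ : ↥G) : Equiv.Perm Ω) x := rfl
    rw [h2]
    have h3 : u (quotHom hinv k σ) = u σ := by rw [hσ']
    simp only [hElem, coe_mul_perm, coe_inv_perm, Equiv.Perm.mul_apply, h3]
    simp
  have hinj : Set.InjOn (fun z => (((u σ)⁻¹ : ↥G) : Equiv.Perm Ω) z)
      (MulAction.orbit ↥(setwiseStabilizer G Δ) x) := by
    intro a _ b _ hab
    exact ((((u σ)⁻¹ : ↥G) : Equiv.Perm Ω)).injective hab
  calc (MulAction.orbit ↥(setwiseStabilizer G Δ) x).ncard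
      ≤ (Subtype.val '' OB).ncard :=
        Set.ncard_le_ncard_of_injOn _ hmaps hinj (Set.toFinite _)
    _ = OB.ncard := Set.ncard_image_of_injective _ Subtype.val_injective
    _ ≤ CB := hTgood (c σ) y₀

end Decor3
section Main
set_option linter.unusedSectionVars false
set_option maxHeartbeats 2000000
open Set Equiv

theorem main_claim : ∀ (n : ℕ) (Ω : Type) [Fintype Ω], Fintype.card Ω = n →
    ∀ (G : Subgroup (Equiv.Perm Ω)), IsSolvable ↥G →
    (∀ x y : Ω, ∃ g : ↥G, (g : Equiv.Perm Ω) x = y) →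
    ∃ T : Fin (min (n+1) 512) → Set Ω,
      (∀ j, Good G (T j)) ∧ (∀ i j, i ≠ j → ¬ SEq G (T i) (T j)) := by
  intro n
  induction n using Nat.strong_induction_on with
  | _ n ih =>
  intro Ω instΩ hcard G hsolv htrans
  by_cases hsmall : n ≤ CB
  · exact base_case n Ω hcard hsmall G
  push_neg at hsmall
  have hn2 : 2 ≤ n := by have : CB = 511 * 511 := rfl; omega
  have hΩne : Nonempty Ω := Fintype.card_pos_iff.1 (by omega)
  obtain ⟨x₀⟩ := hΩne
  -- maximal invariant setoid
  obtain ⟨r, hinv, hrne, hmax⟩ := exists_maximal_inv G (by omega)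
  classical
  letI instQ : Fintype (Quotient r) := Fintype.ofFinite _
  set m := Fintype.card (Quotient r) with hmdef
  -- m ≥ 2
  have hxy : ∃ x y : Ω, Quotient.mk r x ≠ Quotient.mk r y := by
    by_contra h
    push_neg at h
    apply hrne
    rw [Setoid.eq_top_iff]
    intro x y
    exact Quotient.exact (h x y)
  have hm2 : 2 ≤ m := by
    obtain ⟨x1, y1, hne⟩ := hxy
    exact Fintype.one_lt_card_iff_nontrivial.2 ⟨⟨_, _, hne⟩⟩
  set σ₀ := Quotient.mk r x₀ with hσ₀
  letI instB : Fintype {x : Ω // Quotient.mk r x = σ₀} := Fintype.ofFinite _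
  set b := Fintype.card {x : Ω // Quotient.mk r x = σ₀} with hbdef
  have hb1 : 1 ≤ b := by
    rw [hbdef]
    exact Fintype.card_pos_iff.2 ⟨⟨x₀, rfl⟩⟩
  -- transitivity on the quotient
  have htransQ : ∀ σ τ : Quotient r, ∃ g : ↥G, quotHom hinv g σ = τ := by
    intro σ τ
    obtain ⟨x, rfl⟩ := Quotient.exists_rep σ
    obtain ⟨y, rfl⟩ := Quotient.exists_rep τ
    obtain ⟨g, hg⟩ := htrans x y
    exact ⟨g, by rw [quotHom_mk, hg]⟩
  choose u hu using fun σ => htransQ σ₀ σ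
  -- fibers all have size b
  have hfib : ∀ σ : Quotient r, Nat.card {x : Ω // Quotient.mk r x = σ} = b := by
    intro σ
    have hbij : Function.Bijective
        (fun y : {x : Ω // Quotient.mk r x = σ₀} =>
          (⟨((u σ : ↥G) : Equiv.Perm Ω) (y : Ω), by
            have h1 : Quotient.mk r (((u σ : ↥G) : Equiv.Perm Ω) (y : Ω))
                = quotHom hinv (u σ) (Quotient.mk r (y : Ω)) := rfl
            rw [h1, y.2, hu]⟩ : {x : Ω // Quotient.mk r x = σ})) := by
      constructor
      · intro y1 y2 h12
        have := congrArg Subtype.val h12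
        simp only at this
        exact Subtype.ext ((((u σ : ↥G) : Equiv.Perm Ω)).injective this)
      · rintro ⟨z, hz⟩
        refine ⟨⟨(((u σ)⁻¹ : ↥G) : Equiv.Perm Ω) z, ?_⟩, ?_⟩
        · have h1 : Quotient.mk r ((((u σ)⁻¹ : ↥G) : Equiv.Perm Ω) z)
              = quotHom hinv (u σ)⁻¹ (Quotient.mk r z) := rfl
          rw [h1, hz, map_inv]
          exact Equiv.Perm.inv_eq_iff_eq.2 (hu σ).symm
        · apply Subtype.ext
          simp only [coe_inv_perm]
          simp
    calc Nat.card {x : Ω // Quotient.mk r x = σ}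
        = Nat.card {x : Ω // Quotient.mk r x = σ₀} := (Nat.card_eq_of_bijective _ hbij).symm
      _ = b := by rw [Nat.card_eq_fintype_card, hbdef]
  have hnmb : n = m * b := by
    letI : ∀ σ : Quotient r, Fintype {x : Ω // Quotient.mk r x = σ} :=
      fun σ => Fintype.ofFinite _
    have h1 : Fintype.card Ω = ∑ σ : Quotient r, Fintype.card {x : Ω // Quotient.mk r x = σ} := by
      rw [← Fintype.card_sigma]
      exact Fintype.card_congr (Equiv.sigmaFiberEquiv (Quotient.mk r)).symm
    have h2 : ∀ σ : Quotient r, Fintype.card {x : Ω // Quotient.mk r x = σ} = b := by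
      intro σ
      rw [← Nat.card_eq_fintype_card]
      exact hfib σ
    rw [← hcard, h1]
    rw [Finset.sum_congr rfl (fun σ _ => h2 σ), Finset.sum_const, Finset.card_univ, smul_eq_mul]
  have hbn : b < n := by
    rcases Nat.eq_or_lt_of_le hb1 with h | h
    · omega
    · nlinarith
  -- the block group
  set Hr := (resHom hinv σ₀).range with hHrdef
  haveI hsolvBS : Group.IsSolvable ↥(blockStab hinv σ₀) := by
    haveI : Group.IsSolvable ↥G := hsolv; infer_instance
  have hsolvH : IsSolvable ↥Hr := solvable_of_surjective (resHom hinv σ₀).rangeRestrict_surjective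
  have htransH : ∀ y z : {x : Ω // Quotient.mk r x = σ₀},
      ∃ h : ↥Hr, ((h : Equiv.Perm {x : Ω // Quotient.mk r x = σ₀})) y = z := by
    intro y z
    obtain ⟨g, hg⟩ := htrans (y : Ω) (z : Ω)
    have hgB : g ∈ blockStab hinv σ₀ := by
      rw [mem_blockStab]
      have h1 : quotHom hinv g σ₀ = quotHom hinv g (Quotient.mk r (y : Ω)) := by rw [y.2]
      rw [h1]
      have h2 : quotHom hinv g (Quotient.mk r (y : Ω)) = Quotient.mk r ((g : Equiv.Perm Ω) (y : Ω)) := rfl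
      rw [h2, hg, z.2]
    refine ⟨⟨resHom hinv σ₀ ⟨g, hgB⟩, ⟨g, hgB⟩, rfl⟩, ?_⟩
    apply Subtype.ext
    rw [resHom_apply]
    exact hg
  -- apply the induction hypothesis to the block
  obtain ⟨TT', hTT1, hTT2⟩ := ih b hbn {x : Ω // Quotient.mk r x = σ₀} rfl Hr hsolvH
    (fun y z => htransH y z)
  have hidx : ∀ i i', SEq Hr (TT' i) (TT' i') → i = i' := by
    intro i i' hse
    by_contra hne
    exact hTT2 i i' hne hse
  have hminn : min (n + 1) 512 = 512 := by
    have : CB = 511 * 511 := rfl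
    omega
  by_cases hmcase : m ≤ 511
  -- CASE A : few blocks, blocks are large
  · have hb512 : 512 ≤ b := by nlinarith
    have hminb : min (b + 1) 512 = 512 := by omega
    set TT : Fin 512 → Set {x : Ω // Quotient.mk r x = σ₀} :=
      fun i => TT' (Fin.cast hminb.symm i) with hTTdef
    set e := (Fintype.equivFin (Quotient r)) with hedef
    have hcval : ∀ (j : Fin 512) (σ : Quotient r), (((e σ : ℕ) + (j : ℕ)) % 512) < 512 :=
      fun j σ => Nat.mod_lt _ (by norm_num)
    set c : Fin 512 → Quotient r → Fin 512 :=
      fun j σ => ⟨((e σ : ℕ) + (j : ℕ)) % 512, hcval j σ⟩ with hcdef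
    have hcinj : ∀ j : Fin 512, Function.Injective (c j) := by
      intro j σ τ hστ
      have h1 : ((e σ : ℕ) + (j : ℕ)) % 512 = ((e τ : ℕ) + (j : ℕ)) % 512 :=
        congrArg Fin.val hστ
      have h2 : (e σ : ℕ) < m := (e σ).2
      have h3 : (e τ : ℕ) < m := (e τ).2
      have h4 : (e σ : ℕ) = (e τ : ℕ) := by omega
      exact e.injective (Fin.ext h4)
    -- the key consequence of set-equality of decorations
    have hkey : ∀ (j k : Fin 512) (g : ↥G),
        (g : Equiv.Perm Ω) '' ΔOf hinv σ₀ u hu TT (c j) = ΔOf hinv σ₀ u hu TT (c k) →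
        ∀ σ, c j σ = c k (quotHom hinv g σ) := by
      intro j k g hg σ
      have hdk := decor_key hinv σ₀ u hu TT (c j) (c k) g hg σ
      have hse : SEq Hr (TT (c j σ)) (TT (c k (quotHom hinv g σ))) :=
        ⟨⟨_, ⟨_, rfl⟩⟩, hdk⟩
      have := hidx _ _ hse
      have h5 : (Fin.cast hminb.symm (c j σ) : Fin (min (b+1) 512))
          = Fin.cast hminb.symm (c k (quotHom hinv g σ)) := this
      exact Fin.cast_injective _ h5
    have hgood : ∀ j : Fin 512, Good G (ΔOf hinv σ₀ u hu TT (c j)) := by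
      intro j
      apply decor_good hinv σ₀ u hu TT (c j) (fun i => hTT1 _)
      intro g hg
      have h6 := hkey j j g hg
      apply Equiv.ext
      intro σ
      have := hcinj j (h6 σ)
      rw [← this]
      rfl
    have hineq : ∀ j k : Fin 512, j ≠ k →
        ¬ SEq G (ΔOf hinv σ₀ u hu TT (c j)) (ΔOf hinv σ₀ u hu TT (c k)) := by
      intro j k hjk ⟨g, hg⟩
      apply hjk
      have h6 := hkey j k g hg
      -- window argument
      have HH : ∀ a : ℕ, a < m → ∃ a' : ℕ, a' < m ∧
          (a + (j : ℕ)) % 512 = (a' + (k : ℕ)) % 512 := by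
        intro a ha
        set σ := e.symm ⟨a, ha⟩
        have h7 := h6 σ
        refine ⟨(e (quotHom hinv g σ) : ℕ), (e _).2, ?_⟩
        have h8 : (e σ : ℕ) = a := by
          rw [hedef]
          simp [σ, hedef]
        have h9 := congrArg Fin.val h7
        simp only [hcdef] at h9
        rw [h8] at h9
        exact h9
      have HH' : ∀ a : ℕ, a < m → ∃ a' : ℕ, a' < m ∧
          (a + (k : ℕ)) % 512 = (a' + (j : ℕ)) % 512 := by
        intro a ha
        set τ := e.symm ⟨a, ha⟩
        set σ := (quotHom hinv g).symm τ
        have h7 := h6 σ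
        have h10 : quotHom hinv g σ = τ := by simp [σ]
        rw [h10] at h7
        refine ⟨(e σ : ℕ), (e _).2, ?_⟩
        have h8 : (e τ : ℕ) = a := by
          rw [hedef]
          simp [τ, hedef]
        have h9 := congrArg Fin.val h7
        simp only [hcdef] at h9
        rw [h8] at h9
        exact (h9.symm)
      exact Fin.ext (window_eq (by omega) hmcase j.2 k.2 HH HH')
    refine ⟨fun i => ΔOf hinv σ₀ u hu TT (c (Fin.cast hminn i)), fun i => hgood _, ?_⟩
    intro i i' hne hSE
    have := hineq _ _ (fun hc => hne (Fin.cast_injective _ hc)) hSE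
    exact this
  -- CASE B : many blocks, primitive quotient, counting
  · push_neg at hmcase
    have hm512 : 512 ≤ m := hmcase
    set Kq := (quotHom hinv).range with hKqdef
    have hsolvK : IsSolvable ↥Kq := by haveI : Group.IsSolvable ↥G := hsolv; exact solvable_of_surjective (quotHom hinv).rangeRestrict_surjective
    have htransK : KTrans Kq := by
      intro σ τ
      obtain ⟨g, hg⟩ := htransQ σ τ
      exact ⟨⟨quotHom hinv g, ⟨g, rfl⟩⟩, hg⟩
    have hprimK : ∀ s : Setoid (Quotient r), IsInv Kq s → s = ⊥ ∨ s = ⊤ :=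
      fun s hs => quot_primitive hinv hmax s hs
    obtain ⟨R, hR1, hR2⟩ := primitive_supply Kq hsolvK htransK hprimK (by omega)
    have hminb2 : 2 ≤ min (b + 1) 512 := by omega
    set i0 : Fin (min (b + 1) 512) := ⟨0, by omega⟩ with hi0
    set i1 : Fin (min (b + 1) 512) := ⟨1, by omega⟩ with hi1
    have hi01 : i0 ≠ i1 := by
      intro h
      have := congrArg Fin.val h
      simp [hi0, hi1] at this
    set c : Fin 512 → Quotient r → Fin (min (b + 1) 512) :=
      fun j σ => if σ ∈ R j then i1 else i0 with hcdef
    have hkey : ∀ (j k : Fin 512) (g : ↥G),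
        (g : Equiv.Perm Ω) '' ΔOf hinv σ₀ u hu TT' (c j) = ΔOf hinv σ₀ u hu TT' (c k) →
        ∀ σ, c j σ = c k (quotHom hinv g σ) := by
      intro j k g hg σ
      have hdk := decor_key hinv σ₀ u hu TT' (c j) (c k) g hg σ
      exact hidx _ _ ⟨⟨_, ⟨_, rfl⟩⟩, hdk⟩
    have hmemiff : ∀ (j k : Fin 512) (g : ↥G),
        (∀ σ, c j σ = c k (quotHom hinv g σ)) →
        (quotHom hinv g) '' R j = R k := by
      intro j k g h6
      apply perm_image_eq_of_iff
      intro σ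
      have h7 := h6 σ
      rw [hcdef] at h7
      simp only at h7
      by_cases hσ : σ ∈ R j
      · rw [if_pos hσ] at h7
        by_cases hτ : quotHom hinv g σ ∈ R k
        · simp [hτ, hσ]
        · rw [if_neg hτ] at h7
          exact absurd h7.symm hi01
      · rw [if_neg hσ] at h7
        by_cases hτ : quotHom hinv g σ ∈ R k
        · rw [if_pos hτ] at h7
          exact absurd h7 hi01
        · simp [hτ, hσ]
    have hgood : ∀ j : Fin 512, Good G (ΔOf hinv σ₀ u hu TT' (c j)) := by
      intro j
      apply decor_good hinv σ₀ u hu TT' (c j) (fun i => hTT1 _)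
      intro g hg
      have h8 := hmemiff j j g (hkey j j g hg)
      have h9 : (⟨quotHom hinv g, ⟨g, rfl⟩⟩ : ↥Kq) = 1 := hR1 j ⟨quotHom hinv g, ⟨g, rfl⟩⟩ h8
      exact congrArg Subtype.val h9
    have hineq : ∀ j k : Fin 512, j ≠ k →
        ¬ SEq G (ΔOf hinv σ₀ u hu TT' (c j)) (ΔOf hinv σ₀ u hu TT' (c k)) := by
      intro j k hjk ⟨g, hg⟩
      have h8 := hmemiff j k g (hkey j k g hg)
      exact hR2 j k hjk ⟨⟨quotHom hinv g, ⟨g, rfl⟩⟩, h8⟩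
    refine ⟨fun i => ΔOf hinv σ₀ u hu TT' (c (Fin.cast hminn i)), fun i => hgood _, ?_⟩
    intro i i' hne hSE
    exact hineq _ _ (fun hc => hne (Fin.cast_injective _ hc)) hSE

end Main
section Final
set_option linter.unusedSectionVars false
set_option maxHeartbeats 1000000
open Set Equiv

variable {Ω : Type} [Fintype Ω]

/-- The orbit setoid of `G` itself. -/
def orbG (G : Subgroup (Equiv.Perm Ω)) : Setoid Ω where
  r x y := ∃ g : ↥G, (g : Equiv.Perm Ω) x = y
  iseqv := by
    constructor
    · exact fun x => ⟨1, rfl⟩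
    · rintro x y ⟨g, rfl⟩
      exact ⟨g⁻¹, by rw [coe_inv_perm]; simp⟩
    · rintro x y z ⟨g, rfl⟩ ⟨g', rfl⟩
      exact ⟨g' * g, by rw [coe_mul_perm]; rfl⟩

lemma orbG_pres (G : Subgroup (Equiv.Perm Ω)) (g : ↥G) (x : Ω) :
    Quotient.mk (orbG G) ((g : Equiv.Perm Ω) x) = Quotient.mk (orbG G) x :=
  Quotient.sound ⟨g⁻¹, by rw [coe_inv_perm]; simp⟩

lemma orbG_iff (G : Subgroup (Equiv.Perm Ω)) (g : ↥G) (q : Quotient (orbG G)) :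
    ∀ x : Ω, Quotient.mk (orbG G) x = q ↔ Quotient.mk (orbG G) ((g : Equiv.Perm Ω) x) = q := by
  intro x
  rw [orbG_pres]

/-- Restriction to an orbit. -/
def resOrb (G : Subgroup (Equiv.Perm Ω)) (q : Quotient (orbG G)) :
    ↥G →* Equiv.Perm {x : Ω // Quotient.mk (orbG G) x = q} where
  toFun g := Equiv.Perm.subtypePerm (g : Equiv.Perm Ω) (fun x => (orbG_iff G g q x).symm)
  map_one' := by
    ext x
    simp [Equiv.Perm.subtypePerm_apply]
  map_mul' g h := by
    ext x
    simp [Equiv.Perm.subtypePerm_apply]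
    rfl

theorem bounded_orbits_final :
    ∀ (G : Subgroup (Equiv.Perm Ω)), IsSolvable ↥G →
      ∃ Δ : Set Ω, ∀ x : Ω,
        (MulAction.orbit ↥(setwiseStabilizer G Δ) x).ncard ≤ CB := by
  intro G hsolv
  classical
  set f : Ω → Quotient (orbG G) := Quotient.mk (orbG G) with hf
  letI : ∀ q : Quotient (orbG G), Fintype {x : Ω // f x = q} := fun q => Fintype.ofFinite _
  have hGq : ∀ q : Quotient (orbG G),
      ∃ D : Set {x : Ω // f x = q}, Good (resOrb G q).range D := by
    intro q
    have hsolvq : IsSolvable ↥(resOrb G q).range :=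
      by haveI : Group.IsSolvable ↥G := hsolv; exact solvable_of_surjective (resOrb G q).rangeRestrict_surjective
    have htransq : ∀ y z : {x : Ω // f x = q}, ∃ h : ↥(resOrb G q).range,
        ((h : Equiv.Perm {x : Ω // f x = q})) y = z := by
      intro y z
      have hyz : (orbG G) (y : Ω) (z : Ω) := Quotient.exact (y.2.trans z.2.symm)
      obtain ⟨g, hg⟩ := hyz
      refine ⟨⟨resOrb G q g, g, rfl⟩, ?_⟩
      apply Subtype.ext
      exact hg
    obtain ⟨T, hT1, -⟩ := main_claim (Fintype.card {x : Ω // f x = q})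
      {x : Ω // f x = q} rfl (resOrb G q).range hsolvq htransq
    have hpos : 0 < min (Fintype.card {x : Ω // f x = q} + 1) 512 := by omega
    exact ⟨T ⟨0, hpos⟩, hT1 _⟩
  choose D hD using hGq
  set Δ : Set Ω := {x : Ω | (⟨x, rfl⟩ : {y : Ω // f y = f x}) ∈ D (f x)} with hΔ
  have memΔ_iff : ∀ (x : Ω) (q : Quotient (orbG G)) (hx : f x = q),
      x ∈ Δ ↔ (⟨x, hx⟩ : {y : Ω // f y = q}) ∈ D q := by
    intro x q hx
    subst hx
    rfl
  refine ⟨Δ, ?_⟩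
  intro x
  set q := f x with hq
  have hmaps : ∀ z ∈ MulAction.orbit ↥(setwiseStabilizer G Δ) x,
      z ∈ Subtype.val ''
        (MulAction.orbit ↥(setwiseStabilizer (resOrb G q).range (D q)) (⟨x, rfl⟩ : {y : Ω // f y = q})) := by
    intro z hz
    rw [orbit_sws] at hz
    obtain ⟨k, hk, rfl⟩ := hz
    have hres : (resOrb G q k) '' D q = D q := by
      apply perm_image_eq_of_iff
      intro y
      have h1 : ((resOrb G q k y : {y : Ω // f y = q}) : Ω) = (k : Equiv.Perm Ω) (y : Ω) := rfl
      have h2 : (k : Equiv.Perm Ω) (y : Ω) ∈ Δ ↔ (y : Ω) ∈ Δ := perm_image_mem_iff _ hk _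
      have h3 : (y : Ω) ∈ Δ ↔ y ∈ D q := by
        rw [memΔ_iff (y : Ω) q y.2]
      have h4 : (k : Equiv.Perm Ω) (y : Ω) ∈ Δ
          ↔ resOrb G q k y ∈ D q := by
        rw [memΔ_iff ((k : Equiv.Perm Ω) (y : Ω)) q (resOrb G q k y).2]
        constructor
        · intro h
          exact h
        · intro h
          exact h
      rw [← h4, h2, h3]
    have hmem : resOrb G q k ∈ (resOrb G q).range := ⟨k, rfl⟩
    set elt : ↥(setwiseStabilizer (resOrb G q).range (D q)) := ⟨⟨_, hmem⟩, hres⟩ with helt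
    refine ⟨elt • (⟨x, rfl⟩ : {y : Ω // f y = q}), MulAction.mem_orbit _ elt, rfl⟩
  have hinj : Set.InjOn (fun z : Ω => z) (MulAction.orbit ↥(setwiseStabilizer G Δ) x) :=
    fun a _ b _ h => h
  calc (MulAction.orbit ↥(setwiseStabilizer G Δ) x).ncard
      ≤ (Subtype.val '' (MulAction.orbit ↥(setwiseStabilizer (resOrb G q).range (D q))
          (⟨x, rfl⟩ : {y : Ω // f y = q}))).ncard := by
        apply Set.ncard_le_ncard_of_injOn (fun z => z) hmaps hinj (Set.toFinite _)
    _ = (MulAction.orbit ↥(setwiseStabilizer (resOrb G q).range (D q))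
          (⟨x, rfl⟩ : {y : Ω // f y = q})).ncard := Set.ncard_image_of_injective _ Subtype.val_injective
    _ ≤ CB := hD q _

end Final

/-- **Bounded orbits for solvable groups.**
There is a constant `C` such that for every finite set `Ω` and every solvable
permutation group `G ≤ Sym(Ω)` there is a subset `Δ ⊆ Ω` such that every orbit of the
setwise stabilizer `G_Δ` on `Ω` has length at most `C`. -/
theorem bounded_orbits_for_solvable_groups :
    ∃ C : ℕ, ∀ (Ω : Type) [Fintype Ω] (G : Subgroup (Equiv.Perm Ω)),
      IsSolvable ↥G →
      ∃ Δ : Set Ω, ∀ x : Ω,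
        (MulAction.orbit ↥(setwiseStabilizer G Δ) x).ncard ≤ C := by
  exact ⟨CB, fun Ω _ G hsolv => bounded_orbits_final G hsolv⟩
end

section
/- Let Ω be a finite set and let G ≤ Sym(Ω) be a solvable permutation group whose derived length is at most k, where k ≥ 1 (i.e., the k-th term of the derived series of G is trivial). Then there exists a subset Δ ⊆ Ω such that the setwise stabilizer G_Δ has derived length at most k − 1 (i.e., the (k−1)-st term of the derived series of G_Δ is trivial). -/
/-- **Reducing the derived length.**
Let `G ≤ Sym(Ω)` be a solvable permutation group on a finite set `Ω` with derived
length at most `k`, `k ≥ 1` (i.e., the `k`-th term of the derived series of `G` is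
trivial).  Then there is a subset `Δ ⊆ Ω` whose setwise stabilizer `G_Δ` has derived
length at most `k - 1`. -/
theorem reduce_derived_length {Ω : Type*} [Fintype Ω]
    (G : Subgroup (Equiv.Perm Ω)) (k : ℕ) (hk : 1 ≤ k)
    (hG : derivedSeries ↥G k = ⊥) :
    ∃ Δ : Set Ω, derivedSeries ↥(setwiseStabilizer G Δ) (k - 1) = ⊥ := by
  classical
  set A := derivedSeries ↥G (k - 1) with hA
  have hk' : (k - 1) + 1 = k := Nat.succ_pred_eq_of_pos hk
  have hcomm : ⁅A, A⁆ = ⊥ := by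
    rw [hA, ← derivedSeries_succ, hk', hG]
  have hAcomm : ∀ a ∈ A, ∀ b ∈ A, a * b = b * a := by
    intro a ha b hb
    have h := Subgroup.commutator_le.mp hcomm.le a ha b hb
    rw [Subgroup.mem_bot] at h
    exact commutatorElement_eq_one_iff_mul_comm.mp h
  -- the orbit equivalence relation of `A` on `Ω`
  let r : Ω → Ω → Prop := fun x y => ∃ a ∈ A, ((a : Equiv.Perm Ω)) x = y
  have hrefl : ∀ x, r x x := fun x => ⟨1, A.one_mem, by simp⟩
  have hsymm : ∀ {x y}, r x y → r y x := by
    rintro x y ⟨a, ha, rfl⟩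
    exact ⟨a⁻¹, A.inv_mem ha, by simp⟩
  have htrans : ∀ {x y z}, r x y → r y z → r x z := by
    rintro x y z ⟨a, ha, rfl⟩ ⟨b, hb, rfl⟩
    exact ⟨b * a, A.mul_mem hb ha, by simp⟩
  let s : Setoid Ω := ⟨r, ⟨hrefl, hsymm, htrans⟩⟩
  -- `Δ` is a transversal of the orbits of `A`
  let Δ : Set Ω := Set.range (fun q : Quotient s => q.out)
  refine ⟨Δ, ?_⟩
  have hmem : ∀ x : Ω, (Quotient.mk s x).out ∈ Δ := fun x => ⟨_, rfl⟩
  have hrep : ∀ x : Ω, s.r (Quotient.mk s x).out x := fun x =>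
    Quotient.exact (Quotient.out_eq _)
  have huniq : ∀ δ₁ ∈ Δ, ∀ δ₂ ∈ Δ, r δ₁ δ₂ → δ₁ = δ₂ := by
    rintro _ ⟨q₁, rfl⟩ _ ⟨q₂, rfl⟩ h
    have : q₁ = q₂ := by
      rw [← Quotient.out_eq q₁, ← Quotient.out_eq q₂]
      exact Quotient.sound h
    rw [this]
  rw [eq_bot_iff]
  intro g hg
  have hg' : (g : ↥G) ∈ A := by
    have := map_derivedSeries_le_derivedSeries (setwiseStabilizer G Δ).subtype (k - 1)
      ⟨g, hg, rfl⟩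
    exact this
  have hstab : ((g : ↥G) : Equiv.Perm Ω) '' Δ = Δ := g.2
  have hfix : ∀ δ ∈ Δ, ((g : ↥G) : Equiv.Perm Ω) δ = δ := by
    intro δ hδ
    have h1 : ((g : ↥G) : Equiv.Perm Ω) δ ∈ Δ := by
      have := Set.mem_image_of_mem (((g : ↥G) : Equiv.Perm Ω)) hδ
      rwa [hstab] at this
    exact (huniq δ hδ _ h1 ⟨(g : ↥G), hg', rfl⟩).symm
  have hall : ∀ ω : Ω, ((g : ↥G) : Equiv.Perm Ω) ω = ω := by
    intro ω
    obtain ⟨b, hb, hbδ⟩ := hrep ω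
    have hcb : ((g : ↥G) * b : ↥G) = b * (g : ↥G) := hAcomm _ hg' b hb
    calc ((g : ↥G) : Equiv.Perm Ω) ω
        = (((g : ↥G) * b : ↥G) : Equiv.Perm Ω) (Quotient.mk s ω).out := by
          simp only [Subgroup.coe_mul, Equiv.Perm.mul_apply, hbδ]
      _ = ((b : Equiv.Perm Ω)) (((g : ↥G) : Equiv.Perm Ω) (Quotient.mk s ω).out) := by
          rw [hcb]; simp only [Subgroup.coe_mul, Equiv.Perm.mul_apply]
      _ = ((b : Equiv.Perm Ω)) (Quotient.mk s ω).out := by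
          rw [hfix _ (hmem ω)]
      _ = ω := hbδ
  have hperm : ((g : ↥G) : Equiv.Perm Ω) = 1 := Equiv.ext hall
  have : (g : ↥G) = 1 := Subtype.ext hperm
  rw [Subgroup.mem_bot]
  exact Subtype.ext this
end

section
/- Let X be a connected, twin-free graph with vertex set V, let x₀ ∈ V, and let Δ ⊆ V be a special subset with respect to x₀, meaning Δ is disjoint from the ball B₁(x₀) of radius 1 around x₀ and Δ contains the sphere S_{2d}(x₀) = {w ∈ V : dist(x₀,w) = 2d} for every d ≥ 1. Then every automorphism σ of X with σ(Δ) = Δ satisfies σ(x₀) = x₀. -/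
private lemma iso_dist_le {V : Type*} (X : SimpleGraph V) (hconn : X.Connected)
    (σ : X ≃g X) (u v : V) : X.dist (σ u) (σ v) ≤ X.dist u v := by
  obtain ⟨p, hp⟩ := hconn.exists_walk_length_eq_dist u v
  calc X.dist (σ u) (σ v) ≤ (p.map σ.toHom).length := SimpleGraph.dist_le _
    _ = X.dist u v := by rw [SimpleGraph.Walk.length_map, hp]

private lemma iso_dist {V : Type*} (X : SimpleGraph V) (hconn : X.Connected)
    (σ : X ≃g X) (u v : V) : X.dist (σ u) (σ v) = X.dist u v := by
  refine le_antisymm (iso_dist_le X hconn σ u v) ?_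
  have := iso_dist_le X hconn σ.symm (σ u) (σ v)
  simpa using this

private lemma swap_auto {V : Type*} [DecidableEq V] (X : SimpleGraph V) (u v : V)
    (huv : X.Adj u v)
    (h : ∀ w, w ≠ u → w ≠ v → (X.Adj u w ↔ X.Adj v w)) :
    ∀ a b, X.Adj (Equiv.swap u v a) (Equiv.swap u v b) ↔ X.Adj a b := by
  have hne : u ≠ v := huv.ne
  have h' : ∀ w, w ≠ u → w ≠ v → (X.Adj w u ↔ X.Adj w v) := by
    intro w hw hw'
    rw [X.adj_comm w u, X.adj_comm w v]
    exact h w hw hw'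
  intro a b
  rcases eq_or_ne a u with rfl | hau
  · rw [Equiv.swap_apply_left]
    rcases eq_or_ne b a with rfl | hba
    · rw [Equiv.swap_apply_left]; simp
    rcases eq_or_ne b v with rfl | hbv
    · rw [Equiv.swap_apply_right]; exact X.adj_comm b a
    · rw [Equiv.swap_apply_of_ne_of_ne hba hbv]
      exact (h b hba hbv).symm
  rcases eq_or_ne a v with rfl | hav
  · rw [Equiv.swap_apply_right]
    rcases eq_or_ne b u with rfl | hbu
    · rw [Equiv.swap_apply_left]; exact X.adj_comm b a
    rcases eq_or_ne b a with rfl | hba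
    · rw [Equiv.swap_apply_right]; simp
    · rw [Equiv.swap_apply_of_ne_of_ne hbu hba]
      exact h b hbu hba
  rw [Equiv.swap_apply_of_ne_of_ne hau hav]
  rcases eq_or_ne b u with rfl | hbu
  · rw [Equiv.swap_apply_left]; exact (h' a hau hav).symm
  rcases eq_or_ne b v with rfl | hbv
  · rw [Equiv.swap_apply_right]; exact h' a hau hav
  · rw [Equiv.swap_apply_of_ne_of_ne hbu hbv]

/-- **Designated root lemma.**
Let `X` be a connected, twin-free graph (no transposition of two distinct vertices is an
automorphism), let `x₀` be a vertex and let `Δ` be a special subset with respect to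
`x₀`: `Δ` is disjoint from the ball of radius 1 around `x₀` (every `v ∈ Δ` is at
distance `> 1` from `x₀`), and `Δ` contains the sphere of radius `2d` around `x₀` for
every `d ≥ 1`.  Then every automorphism `σ` of `X` with `σ(Δ) = Δ` fixes `x₀`. -/
theorem designated_root {V : Type*} [DecidableEq V] (X : SimpleGraph V) (hconn : X.Connected)
    (htwinfree : ∀ u v : V, u ≠ v →
      ¬ (∀ a b : V, X.Adj (Equiv.swap u v a) (Equiv.swap u v b) ↔ X.Adj a b))
    (x₀ : V) (Δ : Set V)
    (hball : ∀ v ∈ Δ, 1 < X.dist x₀ v)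
    (hspheres : ∀ d : ℕ, 1 ≤ d → ∀ v : V, X.dist x₀ v = 2 * d → v ∈ Δ)
    (σ : X ≃g X) (hσ : (⇑σ) '' Δ = Δ) :
    σ x₀ = x₀ := by
  set y := σ x₀ with hy
  have distσ : ∀ a b : V, X.dist (σ a) (σ b) = X.dist a b := iso_dist X hconn σ
  have hx₀Δ : x₀ ∉ Δ := by
    intro h
    have := hball x₀ h
    simp [X.dist_self] at this
  have hyΔ : y ∉ Δ := by
    intro h
    rw [← hσ] at h
    obtain ⟨u, huΔ, hu⟩ := h
    have : u = x₀ := σ.injective hu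
    exact hx₀Δ (this ▸ huΔ)
  have hA : ∀ w ∈ Δ, 1 < X.dist y w := by
    intro w hw
    rw [← hσ] at hw
    obtain ⟨u, huΔ, rfl⟩ := hw
    rw [hy, distσ]
    exact hball u huΔ
  by_contra hne
  have hne' : x₀ ≠ y := fun h => hne h.symm
  set m := X.dist x₀ y with hm
  have hmpos : 0 < m := hconn.pos_dist_of_ne hne'
  -- helper : distance from x₀ to σ.symm w equals dist y w
  have hsymm : ∀ w : V, X.dist x₀ (σ.symm w) = X.dist y w := by
    intro w
    rw [← distσ x₀ (σ.symm w)]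
    simp [hy]
  rcases eq_or_lt_of_le (Nat.one_le_iff_ne_zero.mpr hmpos.ne') with h1 | h2
  · -- m = 1 : x₀ and y are adjacent, derive twins
    have hadj : X.Adj x₀ y := SimpleGraph.dist_eq_one_iff_adj.mp h1.symm
    have hP : ∀ w, w ≠ x₀ → w ≠ y → (X.Adj x₀ w ↔ X.Adj y w) := by
      intro w hwx hwy
      constructor
      · intro haw
        by_contra hnaw
        have hd2 : X.dist y w = 2 := by
          have hle : X.dist y w ≤ 2 := by
            calc X.dist y w ≤ X.dist y x₀ + X.dist x₀ w := hconn.dist_triangle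
              _ = 1 + 1 := by
                  rw [SimpleGraph.dist_comm, ← hm, ← h1, SimpleGraph.dist_eq_one_iff_adj.mpr haw]
              _ = 2 := rfl
          have h0 : X.dist y w ≠ 0 := fun h => hwy ((hconn.dist_eq_zero_iff.mp h).symm)
          have hone : X.dist y w ≠ 1 := fun h => hnaw (SimpleGraph.dist_eq_one_iff_adj.mp h)
          omega
        have : σ.symm w ∈ Δ := hspheres 1 le_rfl _ (by rw [hsymm w, hd2])
        have hwΔ : w ∈ Δ := by
          rw [← hσ]
          exact ⟨σ.symm w, this, by simp⟩
        have := hball w hwΔ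
        rw [SimpleGraph.dist_eq_one_iff_adj.mpr haw] at this
        omega
      · intro haw
        by_contra hnaw
        have hd2 : X.dist x₀ w = 2 := by
          have hle : X.dist x₀ w ≤ 2 := by
            calc X.dist x₀ w ≤ X.dist x₀ y + X.dist y w := hconn.dist_triangle
              _ = 1 + 1 := by rw [← hm, ← h1, SimpleGraph.dist_eq_one_iff_adj.mpr haw]
              _ = 2 := rfl
          have h0 : X.dist x₀ w ≠ 0 := fun h => hwx ((hconn.dist_eq_zero_iff.mp h).symm)
          have hone : X.dist x₀ w ≠ 1 := fun h => hnaw (SimpleGraph.dist_eq_one_iff_adj.mp h)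
          omega
        have hwΔ : w ∈ Δ := hspheres 1 le_rfl _ (by rw [hd2])
        have := hA w hwΔ
        rw [SimpleGraph.dist_eq_one_iff_adj.mpr haw] at this
        omega
    exact htwinfree x₀ y hne' (swap_auto X x₀ y hadj hP)
  · -- m ≥ 2
    rcases Nat.even_or_odd m with heven | hodd
    · obtain ⟨d, hd⟩ := heven
      exact hyΔ (hspheres d (by omega) y (by omega))
    · -- m odd, m ≥ 3 : find neighbor w of y with dist x₀ w = m - 1
      obtain ⟨p, hp⟩ := hconn.exists_walk_length_eq_dist y x₀
      rw [SimpleGraph.dist_comm, ← hm] at hp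
      obtain ⟨w, hadj, q, rfl⟩ := SimpleGraph.Walk.exists_eq_cons_of_ne (fun h => hne h) p
      · have hqlen : q.length = m - 1 := by
          simp [SimpleGraph.Walk.length_cons] at hp; omega
        have hle : X.dist x₀ w ≤ m - 1 := by
          have := SimpleGraph.dist_le q.reverse
          rwa [SimpleGraph.Walk.length_reverse, hqlen] at this
        have hge : m ≤ X.dist x₀ w + 1 := by
          calc m = X.dist x₀ y := hm
            _ ≤ X.dist x₀ w + X.dist w y := hconn.dist_triangle
            _ ≤ X.dist x₀ w + 1 := by
                have : X.dist w y = 1 := SimpleGraph.dist_eq_one_iff_adj.mpr hadj.symm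
                omega
        have hdw : X.dist x₀ w = m - 1 := by omega
        obtain ⟨k, hk⟩ := hodd
        have hwΔ : w ∈ Δ := hspheres k (by omega) w (by omega)
        have := hA w hwΔ
        rw [SimpleGraph.dist_eq_one_iff_adj.mpr hadj] at this
        omega
end

section
/- Let Ω be a finite set with |Ω| = n and let G be a permutation group with Alt(Ω) ≤ G ≤ Sym(Ω). Then the solvable coloring number of G equals ⌈n/4⌉: there exists a coloring γ : Ω → {1,…,⌈n/4⌉} such that the subgroup G_γ of color-preserving elements of G is solvable, and for every k < ⌈n/4⌉ and every coloring γ : Ω → {1,…,k}, the subgroup G_γ is not solvable. -/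
set_option maxRecDepth 10000


/-- The stabilizer of a coloring `γ : Ω → C` in the permutation group `G ≤ Sym(Ω)`:
the subgroup `{g ∈ G : γ(g⁻¹(x)) = γ(x) for all x}` of color-preserving elements. -/
def coloringStabilizer {Ω C : Type*} (G : Subgroup (Equiv.Perm Ω)) (γ : Ω → C) :
    Subgroup ↥G where
  carrier := {g : ↥G | ∀ x : Ω, γ (((g : Equiv.Perm Ω))⁻¹ x) = γ x}
  one_mem' := by simp; intro x; rfl
  mul_mem' := by
    intro a b ha hb x
    simp only [Set.mem_setOf_eq] at *
    rw [Subgroup.coe_mul, mul_inv_rev, Equiv.Perm.mul_apply, hb, ha]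
  inv_mem' := by
    intro a ha x
    simp only [Set.mem_setOf_eq] at *
    have h := ha ((a : Equiv.Perm Ω) x)
    simpa using h.symm

section Aux

open Equiv Equiv.Perm
open scoped commutatorElement

lemma derivedSeries_eq_bot_mono {G : Type*} [Group G] {n m : ℕ}
    (h : derivedSeries G n = ⊥) (hnm : n ≤ m) : derivedSeries G m = ⊥ := by
  induction m with
  | zero => exact le_antisymm (le_of_eq ((Nat.le_zero.mp hnm) ▸ h)) bot_le
  | succ m ih =>
    rcases Nat.lt_or_ge n (m + 1) with hlt | hge
    · have := ih (Nat.lt_succ_iff.mp hlt)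
      rw [derivedSeries_succ, this, Subgroup.commutator_bot_left]
    · exact le_antisymm (le_of_eq ((Nat.le_antisymm hnm hge) ▸ h)) bot_le

lemma isSolvable_pi {ι : Type*} [Fintype ι] {H : ι → Type*} [∀ i, Group (H i)]
    (h : ∀ i, IsSolvable (H i)) : IsSolvable (∀ i, H i) := by
  choose n hn using fun i => (h i).solvable
  refine ⟨⟨Finset.univ.sup n, ?_⟩⟩
  rw [eq_bot_iff]
  intro g hg
  rw [Subgroup.mem_bot]
  funext i
  have h1 : (Pi.evalMonoidHom H i) g ∈ derivedSeries (H i) (Finset.univ.sup n) :=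
    map_derivedSeries_le_derivedSeries (Pi.evalMonoidHom H i) _
      (Subgroup.mem_map_of_mem _ hg)
  rw [derivedSeries_eq_bot_mono (hn i) (Finset.le_sup (Finset.mem_univ i)),
    Subgroup.mem_bot] at h1
  exact h1

/-- The Klein four-group inside `Perm (Fin 4)`. -/
def kleinFour : Subgroup (Equiv.Perm (Fin 4)) where
  carrier := {g | g * g = 1 ∧ Equiv.Perm.sign g = 1}
  one_mem' := by constructor <;> simp
  mul_mem' := by
    intro a b ha hb
    have key : ∀ g h : Equiv.Perm (Fin 4),
        (g * g = 1 ∧ Equiv.Perm.sign g = 1) → (h * h = 1 ∧ Equiv.Perm.sign h = 1) →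
        ((g * h) * (g * h) = 1 ∧ Equiv.Perm.sign (g * h) = 1) := by decide
    exact key a b ha hb
  inv_mem' := by
    intro a ha
    have key : ∀ g : Equiv.Perm (Fin 4),
        (g * g = 1 ∧ Equiv.Perm.sign g = 1) → (g⁻¹ * g⁻¹ = 1 ∧ Equiv.Perm.sign g⁻¹ = 1) := by
      decide
    exact key a ha

lemma mem_kleinFour {g : Equiv.Perm (Fin 4)} :
    g ∈ kleinFour ↔ (g * g = 1 ∧ Equiv.Perm.sign g = 1) := Iff.rfl

lemma perm_fin4_isSolvable : IsSolvable (Equiv.Perm (Fin 4)) := by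
  have h1 : derivedSeries (Equiv.Perm (Fin 4)) 1 ≤ alternatingGroup (Fin 4) := by
    rw [derivedSeries_succ, derivedSeries_zero, Subgroup.commutator_le]
    intro g _ h _
    rw [Equiv.Perm.mem_alternatingGroup, map_commutatorElement]
    exact commutatorElement_eq_one_iff_mul_comm.mpr (mul_comm _ _)
  have h2 : derivedSeries (Equiv.Perm (Fin 4)) 2 ≤ kleinFour := by
    rw [derivedSeries_succ]
    refine le_trans (Subgroup.commutator_mono h1 h1) ?_
    rw [Subgroup.commutator_le]
    have key : ∀ g h : Equiv.Perm (Fin 4), Equiv.Perm.sign g = 1 → Equiv.Perm.sign h = 1 →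
        (⁅g, h⁆ * ⁅g, h⁆ = 1 ∧ Equiv.Perm.sign ⁅g, h⁆ = 1) := by decide
    intro g hg h hh
    exact key g h (Equiv.Perm.mem_alternatingGroup.mp hg) (Equiv.Perm.mem_alternatingGroup.mp hh)
  have h3 : derivedSeries (Equiv.Perm (Fin 4)) 3 = ⊥ := by
    rw [eq_bot_iff, derivedSeries_succ]
    refine le_trans (Subgroup.commutator_mono h2 h2) ?_
    rw [Subgroup.commutator_le]
    have key : ∀ g h : Equiv.Perm (Fin 4),
        (g * g = 1 ∧ Equiv.Perm.sign g = 1) → (h * h = 1 ∧ Equiv.Perm.sign h = 1) →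
        ⁅g, h⁆ = 1 := by decide
    intro g hg h hh
    rw [Subgroup.mem_bot]
    exact key g h hg hh
  exact ⟨⟨3, h3⟩⟩

lemma perm_isSolvable_of_card_le_four (X : Type*) [Fintype X] [DecidableEq X]
    (h : Fintype.card X ≤ 4) : IsSolvable (Equiv.Perm X) := by
  obtain ⟨e⟩ : Nonempty (X ↪ Fin 4) :=
    Function.Embedding.nonempty_of_card_le (by simpa using h)
  have : Group.IsSolvable (Equiv.Perm (Fin 4)) := perm_fin4_isSolvable
  exact solvable_of_solvable_injective (Equiv.Perm.viaEmbeddingHom_injective e)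

lemma alternatingGroup_not_solvable (X : Type*) [Fintype X] [DecidableEq X]
    (h : 5 ≤ Fintype.card X) : ¬ IsSolvable ↥(alternatingGroup X) := by
  intro hs
  refine Equiv.Perm.not_solvable X ?_ ?_
  · rw [Cardinal.mk_fintype]
    exact_mod_cast h
  · have hZ : Group.IsSolvable ℤˣ := inferInstance
    have hs' : Group.IsSolvable ↥(alternatingGroup X) := hs
    exact solvable_of_ker_le_range (alternatingGroup X).subtype Equiv.Perm.sign
      (by rw [Subgroup.range_subtype]; intro g hg; exact hg)

end Aux

/-- **Solvable coloring number of groups between `Alt(Ω)` and `Sym(Ω)`.**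
Let `Ω` be a finite set with `n` elements and let `G` be a permutation group with
`Alt(Ω) ≤ G ≤ Sym(Ω)`.  Then the solvable coloring number of `G` equals `⌈n/4⌉`
(here `⌈n/4⌉ = (n+3)/4` in natural-number arithmetic): there is a coloring of `Ω` with
`⌈n/4⌉` colors whose stabilizer in `G` is solvable, while for every `k < ⌈n/4⌉` and
every coloring with `k` colors the stabilizer in `G` is not solvable. -/
theorem solvable_coloring_number_alternating {Ω : Type*} [Fintype Ω] [DecidableEq Ω]
    (G : Subgroup (Equiv.Perm Ω)) (halt : alternatingGroup Ω ≤ G) :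
    (∃ γ : Ω → Fin ((Fintype.card Ω + 3) / 4),
        IsSolvable ↥(coloringStabilizer G γ)) ∧
      ∀ k : ℕ, k < (Fintype.card Ω + 3) / 4 →
        ∀ γ : Ω → Fin k, ¬ IsSolvable ↥(coloringStabilizer G γ) := by
  set n := Fintype.card Ω with hn
  constructor
  · -- construct a coloring with fibers of size ≤ 4
    let e : Ω ≃ Fin n := Fintype.equivFin Ω
    have hbound : ∀ x : Ω, (e x : ℕ) / 4 < (n + 3) / 4 := by
      intro x
      have := (e x).isLt
      omega
    refine ⟨fun x => ⟨(e x : ℕ) / 4, hbound x⟩, ?_⟩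
    set γ : Ω → Fin ((n + 3) / 4) := fun x => ⟨(e x : ℕ) / 4, hbound x⟩ with hγ
    -- each fiber has at most 4 elements
    have hfiber : ∀ c : Fin ((n + 3) / 4), Fintype.card {x : Ω // γ x = c} ≤ 4 := by
      intro c
      have : Function.Injective (fun x : {x : Ω // γ x = c} =>
          (⟨(e x.1 : ℕ) % 4, Nat.mod_lt _ (by norm_num)⟩ : Fin 4)) := by
        rintro ⟨x, hx⟩ ⟨y, hy⟩ hxy
        have hx' : (e x : ℕ) / 4 = (c : ℕ) := congrArg Fin.val hx
        have hy' : (e y : ℕ) / 4 = (c : ℕ) := congrArg Fin.val hy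
        have hxy' : (e x : ℕ) % 4 = (e y : ℕ) % 4 := congrArg Fin.val hxy
        have : (e x : ℕ) = (e y : ℕ) := by omega
        exact Subtype.ext (e.injective (Fin.val_injective this))
      simpa using Fintype.card_le_of_injective _ this
    -- restrict elements of the stabilizer to the fibers
    have hpres : ∀ g : ↥(coloringStabilizer G γ), ∀ x : Ω,
        γ (((g : ↥G) : Equiv.Perm Ω) x) = γ x := by
      intro g x
      have := g.2 ((((g : ↥G) : Equiv.Perm Ω)) x)
      simpa using this.symm
    let Φ : ↥(coloringStabilizer G γ) →* ∀ c : Fin ((n + 3) / 4),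
        Equiv.Perm {x : Ω // γ x = c} :=
      MonoidHom.mk' (fun g => fun c => Equiv.Perm.subtypePerm ((g : ↥G) : Equiv.Perm Ω)
        (fun x => by
          constructor
          · intro hx; rw [← hpres g x]; exact hx
          · intro hx; rw [hpres g x]; exact hx))
        (by
          intro g h
          funext c
          ext x
          simp [Equiv.Perm.subtypePerm])
    have hΦinj : Function.Injective Φ := by
      intro g h hgh
      have : ∀ x : Ω, ((g : ↥G) : Equiv.Perm Ω) x = ((h : ↥G) : Equiv.Perm Ω) x := by
        intro x
        have := congrFun hgh (γ x)
        have := congrArg (fun σ => (σ ⟨x, rfl⟩ : {y : Ω // γ y = γ x}).1) this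
        exact this
      exact Subtype.ext (Subtype.ext (Equiv.ext this))
    have hsolv : Group.IsSolvable (∀ c : Fin ((n + 3) / 4), Equiv.Perm {x : Ω // γ x = c}) :=
      isSolvable_pi (fun c => perm_isSolvable_of_card_le_four _ (hfiber c))
    exact solvable_of_solvable_injective hΦinj
  · -- lower bound: any coloring with fewer colors has non-solvable stabilizer
    intro k hk γ hsolv
    have h4k : Fintype.card (Fin k) * 4 < n := by
      rw [Fintype.card_fin]
      omega
    obtain ⟨c, hc⟩ := Fintype.exists_lt_card_fiber_of_mul_lt_card γ h4k
    have hcard : 5 ≤ Fintype.card {x : Ω // γ x = c} := by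
      rw [Fintype.card_subtype]
      exact hc
    -- embed the alternating group of the fiber into the stabilizer
    set p : Ω → Prop := fun x => γ x = c with hp
    have hmemG : ∀ σ : ↥(alternatingGroup {x : Ω // p x}),
        Equiv.Perm.ofSubtype (σ : Equiv.Perm {x : Ω // p x}) ∈ G := by
      intro σ
      apply halt
      rw [Equiv.Perm.mem_alternatingGroup, Equiv.Perm.sign_ofSubtype]
      exact Equiv.Perm.mem_alternatingGroup.mp σ.2
    have hmemStab : ∀ σ : ↥(alternatingGroup {x : Ω // p x}), ∀ x : Ω,
        γ ((Equiv.Perm.ofSubtype (σ : Equiv.Perm {x : Ω // p x}))⁻¹ x) = γ x := by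
      intro σ x
      rw [← map_inv]
      by_cases hx : p x
      · rw [Equiv.Perm.ofSubtype_apply_of_mem _ hx]
        have h1 : p (((σ : Equiv.Perm {x : Ω // p x})⁻¹ ⟨x, hx⟩ : {x : Ω // p x}) : Ω) :=
          ((σ : Equiv.Perm {x : Ω // p x})⁻¹ ⟨x, hx⟩).2
        exact (h1 : γ _ = c).trans (hx : γ x = c).symm
      · rw [Equiv.Perm.ofSubtype_apply_of_not_mem _ hx]
    let Ψ₁ : ↥(alternatingGroup {x : Ω // p x}) →* ↥G :=
      MonoidHom.codRestrict
        ((Equiv.Perm.ofSubtype).comp (alternatingGroup {x : Ω // p x}).subtype) G hmemG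
    let Ψ : ↥(alternatingGroup {x : Ω // p x}) →* ↥(coloringStabilizer G γ) :=
      MonoidHom.codRestrict Ψ₁ (coloringStabilizer G γ) (fun σ => hmemStab σ)
    have hΨinj : Function.Injective Ψ := by
      intro σ τ hστ
      have h1 : Equiv.Perm.ofSubtype (σ : Equiv.Perm {x : Ω // p x}) =
          Equiv.Perm.ofSubtype (τ : Equiv.Perm {x : Ω // p x}) :=
        congrArg (fun g : ↥(coloringStabilizer G γ) => (g.1.1 : Equiv.Perm Ω)) hστ
      refine Subtype.ext (Equiv.ext fun x => ?_)
      have := congrArg (fun g : Equiv.Perm Ω => g (x : Ω)) h1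
      simpa [Equiv.Perm.ofSubtype_apply_coe, Subtype.ext_iff] using this
    have hsolv' : Group.IsSolvable ↥(coloringStabilizer G γ) := hsolv
    have : IsSolvable ↥(alternatingGroup {x : Ω // p x}) :=
      solvable_of_solvable_injective hΨinj
    exact alternatingGroup_not_solvable {x : Ω // p x} hcard this
end

section
/- There exist ε > 0 and a threshold n₁ such that the following holds: if G ≤ Sym(Ω) is a primitive solvable permutation group of degree n = |Ω| ≥ n₁, then for every integer j with n^{1−ε} ≤ j ≤ n/2 there exists a G-asymmetric subset Δ_j ⊆ Ω with |Δ_j| = j, i.e., a subset of size j whose setwise stabilizer in G is trivial. -/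
set_option linter.unusedSectionVars false

section Aux

open Equiv Subgroup

variable {Ω : Type} [Fintype Ω] {G V : Subgroup (Equiv.Perm Ω)}

section structure_lemmas

variable (hcomm : ∀ v ∈ V, ∀ w ∈ V, v * w = w * v)
    (htrans : ∀ a b : Ω, ∃ v ∈ V, v a = b)

include hcomm htrans in
lemma free_of_comm_trans : ∀ v ∈ V, ∀ α : Ω, v α = α → v = 1 := by
  intro v hv α hα
  ext β
  obtain ⟨w, hw, rfl⟩ := htrans α β
  have : (v * w) α = (w * v) α := by rw [hcomm v hv w hw]
  simpa [Equiv.Perm.mul_apply, hα] using this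

include hcomm htrans in
lemma card_V_eq [Nonempty Ω] : Nat.card V = Fintype.card Ω := by
  classical
  obtain ⟨α⟩ := ‹Nonempty Ω›
  have : Function.Bijective (fun v : V => (v : Equiv.Perm Ω) α) := by
    constructor
    · intro v w h
      simp only at h
      have hmem : ((w : Equiv.Perm Ω))⁻¹ * (v : Equiv.Perm Ω) ∈ V := mul_mem (inv_mem w.2) v.2
      have : ((↑w)⁻¹ * (v : Equiv.Perm Ω)) α = α := by
        simp [Equiv.Perm.mul_apply, h]
      have := free_of_comm_trans hcomm htrans _ hmem α this
      have := inv_mul_eq_one.mp this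
      exact Subtype.ext this.symm
    · intro β
      obtain ⟨v, hv, hvβ⟩ := htrans α β
      exact ⟨⟨v, hv⟩, hvβ⟩
  rw [Nat.card_eq_of_bijective _ this, Nat.card_eq_fintype_card]

variable (hVG : V ≤ G) (hnorm : ∀ g ∈ G, ∀ v ∈ V, g * v * g⁻¹ ∈ V)

include hcomm htrans hVG hnorm in
lemma fix_bound : ∀ g ∈ G, g ≠ 1 → 2 * Nat.card {x : Ω // g x = x} ≤ Fintype.card Ω := by
  classical
  intro g hg hg1
  rcases isEmpty_or_nonempty {x : Ω // g x = x} with hE | hNE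
  · simp [Nat.card_of_isEmpty]
  obtain ⟨⟨α, hα⟩⟩ := hNE
  have hNEΩ : Nonempty Ω := ⟨α⟩
  set W : Subgroup (Equiv.Perm Ω) := V ⊓ Subgroup.centralizer {g} with hW
  have hWV : W ≤ V := inf_le_left
  -- bijection W ≃ Fix g
  have hbij : Function.Bijective
      (fun v : W => (⟨(v : Equiv.Perm Ω) α, by
        obtain ⟨v, hvV, hvc⟩ := v
        have hcg : v * g = g * v := Subgroup.mem_centralizer_singleton_iff.mp hvc
        show g (v α) = v α
        have : (g * v) α = (v * g) α := by rw [hcg]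
        simpa [Equiv.Perm.mul_apply, hα] using this
        ⟩ : {x : Ω // g x = x})) := by
    constructor
    · intro v w h
      simp only [Subtype.mk.injEq] at h
      have hmem : ((w : Equiv.Perm Ω))⁻¹ * (v : Equiv.Perm Ω) ∈ V := mul_mem (inv_mem (hWV w.2)) (hWV v.2)
      have hfix : ((↑w)⁻¹ * (v : Equiv.Perm Ω)) α = α := by
        simp [Equiv.Perm.mul_apply, h]
      have := free_of_comm_trans hcomm htrans _ hmem α hfix
      exact Subtype.ext ((inv_mul_eq_one.mp this)).symm
    · rintro ⟨β, hβ⟩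
      obtain ⟨v, hvV, hvβ⟩ := htrans α β
      have hginv : g⁻¹ α = α := by
        conv_lhs => rw [← hα]
        simp
      have hconj : g * v * g⁻¹ ∈ V := hnorm g hg v hvV
      have hconjfix : ((g * v * g⁻¹) : Equiv.Perm Ω) α = v α := by
        simp [Equiv.Perm.mul_apply, hginv, hvβ, hβ]
      have hmem : v⁻¹ * (g * v * g⁻¹) ∈ V := mul_mem (inv_mem hvV) hconj
      have hfix : ((v⁻¹ * (g * v * g⁻¹)) : Equiv.Perm Ω) α = α := by
        simp only [Equiv.Perm.mul_apply]
        simp only [Equiv.Perm.mul_apply] at hconjfix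
        rw [hconjfix]
        simp
      have h1 := free_of_comm_trans hcomm htrans _ hmem α hfix
      have hcent : g * v * g⁻¹ = v := by
        have := inv_mul_eq_one.mp h1
        exact this.symm
      have hvW : v ∈ W := by
        refine ⟨hvV, Subgroup.mem_centralizer_singleton_iff.mpr ?_⟩
        conv_lhs => rw [← hcent]
        group
      exact ⟨⟨v, hvW⟩, by simpa using hvβ⟩
  have hcardW : Nat.card W = Nat.card {x : Ω // g x = x} :=
    Nat.card_eq_of_bijective _ hbij
  -- W is proper in V
  have hproper : ¬ (V ≤ W) := by
    intro hVW
    apply hg1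
    ext β
    obtain ⟨v, hvV, rfl⟩ := htrans α β
    have hvc : v * g = g * v := Subgroup.mem_centralizer_singleton_iff.mp (hVW hvV).2
    have : (g * v) α = (v * g) α := by rw [hvc]
    simpa [Equiv.Perm.mul_apply, hα] using this
  -- index argument
  have hrel : (W.subgroupOf V).index * Nat.card (W.subgroupOf V) = Nat.card V :=
    Subgroup.index_mul_card _
  have hcardsub : Nat.card (W.subgroupOf V) = Nat.card W :=
    Nat.card_congr (Subgroup.subgroupOfEquivOfLe hWV).toEquiv
  have hne1 : (W.subgroupOf V).index ≠ 1 := fun h1 =>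
    hproper (Subgroup.relIndex_eq_one.mp h1)
  have hne0 : (W.subgroupOf V).index ≠ 0 := Subgroup.index_ne_zero_of_finite
  have h2 : 2 ≤ (W.subgroupOf V).index := by omega
  have : 2 * Nat.card W ≤ Nat.card V := by
    calc 2 * Nat.card W = 2 * Nat.card (W.subgroupOf V) := by rw [hcardsub]
    _ ≤ (W.subgroupOf V).index * Nat.card (W.subgroupOf V) := Nat.mul_le_mul_right _ h2
    _ = Nat.card V := hrel
  rw [hcardW, card_V_eq hcomm htrans] at this
  exact this

end structure_lemmas

lemma exists_gen {P : Type*} [Group P] [Finite P] :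
    ∀ (k : ℕ) (H V : Subgroup P), H ≤ V → Nat.card V ≤ 2 ^ k * Nat.card H →
      ∃ S : Finset P, ↑S ⊆ (V : Set P) ∧ H ⊔ Subgroup.closure ↑S = V ∧ S.card ≤ k := by
  classical
  intro k
  induction k with
  | zero =>
    intro H V hle hcard
    refine ⟨∅, by simp, ?_, le_refl 0⟩
    simp only [Finset.coe_empty, Subgroup.closure_empty, sup_bot_eq]
    exact Subgroup.eq_of_le_of_card_ge hle (by simpa using hcard)
  | succ k ih =>
    intro H V hle hcard
    by_cases hHV : H = V
    · exact ⟨∅, by simp, by simp [hHV], by simp⟩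
    · obtain ⟨x, hxV, hxH⟩ : ∃ x, x ∈ V ∧ x ∉ H := by
        by_contra h
        push_neg at h
        exact hHV (le_antisymm hle fun y hy => h y hy)
      set H' : Subgroup P := H ⊔ Subgroup.closure {x} with hH'
      have hH'le : H' ≤ V := sup_le hle (by simpa [Subgroup.closure_le] using hxV)
      have hHH' : H ≤ H' := le_sup_left
      have hxH' : x ∈ H' := Subgroup.mem_sup_right (Subgroup.subset_closure rfl)
      have hdouble : 2 * Nat.card H ≤ Nat.card H' := by
        have hrel : (H.subgroupOf H').index * Nat.card (H.subgroupOf H') = Nat.card H' :=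
          Subgroup.index_mul_card _
        have hcardsub : Nat.card (H.subgroupOf H') = Nat.card H :=
          Nat.card_congr (Subgroup.subgroupOfEquivOfLe hHH').toEquiv
        have hne1 : (H.subgroupOf H').index ≠ 1 := by
          intro h1
          have : H' ≤ H := Subgroup.relIndex_eq_one.mp h1
          exact hxH (this hxH')
        have hne0 : (H.subgroupOf H').index ≠ 0 := Subgroup.index_ne_zero_of_finite
        have : 2 ≤ (H.subgroupOf H').index := by omega
        calc 2 * Nat.card H = 2 * Nat.card (H.subgroupOf H') := by rw [hcardsub]
        _ ≤ (H.subgroupOf H').index * Nat.card (H.subgroupOf H') :=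
            Nat.mul_le_mul_right _ this
        _ = Nat.card H' := hrel
      obtain ⟨S, hSV, hSsup, hScard⟩ := ih H' V hH'le (by
        calc Nat.card V ≤ 2 ^ (k+1) * Nat.card H := hcard
        _ = 2 ^ k * (2 * Nat.card H) := by ring
        _ ≤ 2 ^ k * Nat.card H' := Nat.mul_le_mul_left _ hdouble)
      refine ⟨insert x S, ?_, ?_, ?_⟩
      · intro y hy
        simp only [Finset.coe_insert, Set.mem_insert_iff] at hy
        rcases hy with rfl | hy
        · exact hxV
        · exact hSV hy
      · rw [Finset.coe_insert, Set.insert_eq, Subgroup.closure_union, ← sup_assoc, ← hH', hSsup]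
      · calc (insert x S).card ≤ S.card + 1 := Finset.card_insert_le _ _
        _ ≤ k + 1 := by omega

section cardG

variable (hcomm : ∀ v ∈ V, ∀ w ∈ V, v * w = w * v)
    (htrans : ∀ a b : Ω, ∃ v ∈ V, v a = b)
    (hVG : V ≤ G) (hnorm : ∀ g ∈ G, ∀ v ∈ V, g * v * g⁻¹ ∈ V)

include hcomm htrans hVG hnorm in
lemma card_G_le [Nonempty Ω] :
    Nat.card G ≤ Fintype.card Ω ^ (Nat.log 2 (Fintype.card Ω) + 2) := by
  classical
  obtain ⟨α⟩ := ‹Nonempty Ω›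
  set n := Fintype.card Ω with hn
  set d := Nat.log 2 n + 1 with hd
  have hnpos : 0 < n := Fintype.card_pos
  have hcV : Nat.card V = n := card_V_eq hcomm htrans
  obtain ⟨S, hSV, hSgen, hScard⟩ := exists_gen d ⊥ V bot_le (by
    rw [Subgroup.card_bot, mul_one, hcV, hd]
    exact le_of_lt (Nat.lt_pow_succ_log_self (by norm_num) n))
  rw [bot_sup_eq] at hSgen
  -- injection
  have hinj : Function.Injective
      (fun g : G => (((g : Equiv.Perm Ω) α, fun s : S => (g : Equiv.Perm Ω) ((s : Equiv.Perm Ω) α))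
        : Ω × (S → Ω))) := by
    intro g₁ g₂ heq
    simp only [Prod.mk.injEq, funext_iff] at heq
    obtain ⟨hα, hs⟩ := heq
    set h : Equiv.Perm Ω := (g₂ : Equiv.Perm Ω)⁻¹ * g₁ with hh
    have hhG : h ∈ G := mul_mem (inv_mem g₂.2) g₁.2
    have hhα : h α = α := by
      simp [hh, Equiv.Perm.mul_apply, hα]
    have hhαinv : h⁻¹ α = α := by
      conv_lhs => rw [← hhα]
      simp
    have hcent : (S : Set (Equiv.Perm Ω)) ⊆ Subgroup.centralizer {h} := by
      intro s hsS
      have hsV : s ∈ V := hSV hsS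
      have hsα : h (s α) = s α := by
        have h2 : (g₁ : Equiv.Perm Ω) (s α) = (g₂ : Equiv.Perm Ω) (s α) := hs ⟨s, hsS⟩
        simp only [hh, Equiv.Perm.mul_apply, h2, Equiv.Perm.inv_def, Equiv.symm_apply_apply]
      have hconj : h * s * h⁻¹ ∈ V := hnorm h hhG s hsV
      have hfix : ((s⁻¹ * (h * s * h⁻¹)) : Equiv.Perm Ω) α = α := by
        simp only [Equiv.Perm.mul_apply]
        rw [hhαinv, hsα]
        simp
      have hmem : s⁻¹ * (h * s * h⁻¹) ∈ V := mul_mem (inv_mem hsV) hconj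
      have h1 := free_of_comm_trans hcomm htrans _ hmem α hfix
      have hcent' : h * s * h⁻¹ = s := (inv_mul_eq_one.mp h1).symm
      apply Subgroup.mem_centralizer_singleton_iff.mpr
      conv_lhs => rw [← hcent']
      group
    have hVcent : V ≤ Subgroup.centralizer {h} := by
      rw [← hSgen]
      exact Subgroup.closure_le _ |>.mpr hcent
    have hid : h = 1 := by
      ext β
      obtain ⟨v, hvV, rfl⟩ := htrans α β
      have hvc : v * h = h * v := Subgroup.mem_centralizer_singleton_iff.mp (hVcent hvV)
      have : (h * v) α = (v * h) α := by rw [hvc]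
      simpa [Equiv.Perm.mul_apply, hhα] using this
    have : (g₂ : Equiv.Perm Ω)⁻¹ * g₁ = 1 := hid
    exact (Subtype.ext (inv_mul_eq_one.mp this)).symm
  have hle : Nat.card G ≤ Nat.card (Ω × (S → Ω)) :=
    Nat.card_le_card_of_injective _ hinj
  have hcardprod : Nat.card (Ω × (S → Ω)) = n * n ^ S.card := by
    rw [Nat.card_prod, Nat.card_fun, Nat.card_eq_fintype_card, Nat.card_eq_finsetCard]
  calc Nat.card G ≤ n * n ^ S.card := by rw [← hcardprod]; exact hle
  _ ≤ n * n ^ d := by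
      exact Nat.mul_le_mul_left _ (Nat.pow_le_pow_right hnpos hScard)
  _ = n ^ (Nat.log 2 n + 2) := by rw [hd]; ring

end cardG


open Equiv Subgroup MulAction


open commutatorElement in
lemma exists_V (G : Subgroup (Equiv.Perm Ω))
    (htrans : MulAction.IsPretransitive ↥G Ω)
    (hprim : ∀ B : Set Ω, MulAction.IsBlock ↥G B → B.Subsingleton ∨ B = Set.univ)
    (hsolv : IsSolvable ↥G)
    (hcard : 2 ≤ Fintype.card Ω) :
    ∃ V : Subgroup (Equiv.Perm Ω), V ≤ G ∧ (∀ g ∈ G, ∀ v ∈ V, g * v * g⁻¹ ∈ V) ∧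
      (∀ v ∈ V, ∀ w ∈ V, v * w = w * v) ∧ (∀ a b : Ω, ∃ v ∈ V, v a = b) := by
  classical
  -- G is nontrivial
  obtain ⟨a₁, b₁, hab⟩ := Fintype.exists_pair_of_one_lt_card (α := Ω) (by omega)
  obtain ⟨σ, hσ⟩ := htrans.exists_smul_eq a₁ b₁
  have hσ1 : σ ≠ 1 := by
    intro h
    rw [h, one_smul] at hσ
    exact hab hσ
  have htop : (⊤ : Subgroup ↥G) ≠ ⊥ := by
    intro h
    have : σ ∈ (⊥ : Subgroup ↥G) := h ▸ Subgroup.mem_top σ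
    exact hσ1 (Subgroup.mem_bot.mp this)
  -- last nontrivial derived series term
  obtain ⟨m, hm⟩ := hsolv
  have hP : ∃ k, derivedSeries ↥G k = ⊥ := ⟨m, hm⟩
  set k₀ := Nat.find hP with hk₀
  have hk₀spec : derivedSeries ↥G k₀ = ⊥ := Nat.find_spec hP
  have hk₀pos : k₀ ≠ 0 := by
    intro h
    rw [h] at hk₀spec
    exact htop hk₀spec
  set N : Subgroup ↥G := derivedSeries ↥G (k₀ - 1) with hN
  have hNbot : N ≠ ⊥ := Nat.find_min hP (by omega)
  have hNnormal : N.Normal := derivedSeries_normal _ _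
  have hNcomm : ⁅N, N⁆ = ⊥ := by
    have : derivedSeries ↥G (k₀ - 1 + 1) = ⁅N, N⁆ := derivedSeries_succ ↥G (k₀ - 1)
    rw [← this]
    have : k₀ - 1 + 1 = k₀ := by omega
    rw [this, hk₀spec]
  -- orbits of N are blocks; some orbit is all of Ω
  have horb : ∃ a₀ : Ω, MulAction.orbit N a₀ = Set.univ := by
    by_contra h
    push_neg at h
    apply hNbot
    rw [eq_bot_iff]
    intro ν hν
    have hid0 : ∀ a : Ω, (ν : ↥G) • a = a := by
      intro a
      have hblock := MulAction.IsBlock.orbit_of_normal (N := N) a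
      rcases hprim _ hblock with hsub | huniv
      · exact hsub (MulAction.mem_orbit a (⟨ν, hν⟩ : N)) (MulAction.mem_orbit_self a)
      · exact absurd huniv (h a)
    rw [Subgroup.mem_bot]
    ext a
    have := hid0 a
    simpa [Subgroup.smul_def, Equiv.Perm.smul_def] using this
  obtain ⟨a₀, ha₀⟩ := horb
  refine ⟨N.map G.subtype, ?_, ?_, ?_, ?_⟩
  · intro x hx
    obtain ⟨ν, _, rfl⟩ := hx
    exact (ν : ↥G).2
  · rintro g hg v ⟨ν, hν, rfl⟩
    refine ⟨(⟨g, hg⟩ : ↥G) * ν * (⟨g, hg⟩ : ↥G)⁻¹, hNnormal.conj_mem ν hν _, ?_⟩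
    simp [Subgroup.coe_subtype]
  · rintro v ⟨ν, hν, rfl⟩ w ⟨μ, hμ, rfl⟩
    have hc : ⁅ν, μ⁆ ∈ ⁅N, N⁆ := Subgroup.commutator_mem_commutator hν hμ
    rw [hNcomm, Subgroup.mem_bot, commutatorElement_eq_one_iff_mul_comm] at hc
    rw [← map_mul, ← map_mul, hc]
  · -- transitivity
    have horbit : ∀ b : Ω, ∃ ν : N, ((ν : ↥G) : Equiv.Perm Ω) a₀ = b := by
      intro b
      have : b ∈ MulAction.orbit N a₀ := ha₀ ▸ Set.mem_univ b
      obtain ⟨ν, hν⟩ := this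
      exact ⟨ν, by simpa [Subgroup.smul_def, Equiv.Perm.smul_def] using hν⟩
    intro a b
    obtain ⟨ν₁, hν₁⟩ := horbit a
    obtain ⟨ν₂, hν₂⟩ := horbit b
    refine ⟨((ν₂ : ↥G) : Equiv.Perm Ω) * ((ν₁ : ↥G) : Equiv.Perm Ω)⁻¹, ?_, ?_⟩
    · refine Subgroup.mul_mem _ ⟨ν₂, ν₂.2, rfl⟩ (Subgroup.inv_mem _ ⟨ν₁, ν₁.2, rfl⟩)
    · simp only [Equiv.Perm.mul_apply]
      rw [← hν₁]
      simp [hν₂]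


open Finset

variable {Ω : Type} [Fintype Ω] [DecidableEq Ω]

lemma invariant_count_s14 (g : Equiv.Perm Ω)
    (hfix : 2 * (Finset.univ.filter fun x => g x = x).card ≤ Fintype.card Ω) (j : ℕ) :
    ((Finset.univ.powersetCard j).filter (fun Δ : Finset Ω => Δ.image g = Δ)).card
      ≤ ∑ s ∈ Finset.range (j + 1), Nat.choose (3 * Fintype.card Ω / 4) s := by
  classical
  set n := Fintype.card Ω with hn
  set st : Setoid Ω := ⟨g.SameCycle, ⟨fun x => Equiv.Perm.SameCycle.refl g x,
    fun h => h.symm, fun h h' => h.trans h'⟩⟩ with hst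
  set rep : Ω → Ω := fun x => (Quotient.mk st x).out with hrep
  have hrel : ∀ x, g.SameCycle x (rep x) := fun x => Setoid.symm (Quotient.mk_out x)
  have hrepeq : ∀ x y, g.SameCycle x y → rep x = rep y := by
    intro x y h
    simp only [hrep]
    congr 1
    exact Quotient.sound h
  have hsame_of_repeq : ∀ x y, rep x = rep y → g.SameCycle x y := by
    intro x y h
    have hq : (Quotient.mk st x) = (Quotient.mk st y) := Quotient.out_injective h
    exact Quotient.exact hq
  have hrep_idem : ∀ x, rep (rep x) = rep x := fun x => (hrepeq _ _ (hrel x)).symm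
  have hrepg : ∀ x, rep (g x) = rep x := fun x => (hrepeq _ _ ⟨1, by simp⟩).symm
  set R : Finset Ω := Finset.univ.image rep with hR
  have hrepR : ∀ x, rep x ∈ R := fun x => Finset.mem_image_of_mem rep (Finset.mem_univ x)
  -- size of R
  have hRcard : 4 * R.card ≤ 3 * n := by
    have hfib : Finset.univ.card = ∑ r ∈ R, (Finset.univ.filter fun x => rep x = r).card :=
      Finset.card_eq_sum_card_fiberwise (fun x _ => hrepR x)
    set F1 : Finset Ω := R.filter (fun r => g r = r) with hF1
    have hF1le : F1.card ≤ (Finset.univ.filter fun x => g x = x).card :=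
      Finset.card_le_card (fun r hr => by
        simp only [hF1, Finset.mem_filter] at hr ⊢
        exact ⟨Finset.mem_univ _, hr.2⟩)
    have hrepfix : ∀ r ∈ R, rep r = r := by
      intro r hr
      obtain ⟨x, -, rfl⟩ := Finset.mem_image.mp hr
      exact hrep_idem x
    have hbig : ∀ r ∈ R, (if r ∈ F1 then 1 else 2) ≤ (Finset.univ.filter fun x => rep x = r).card := by
      intro r hr
      by_cases hfx : r ∈ F1
      · simp only [if_pos hfx]
        refine Finset.card_pos.mpr ⟨r, ?_⟩
        simp [hrepfix r hr]
      · simp only [if_neg hfx]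
        have hgr : g r ≠ r := by
          intro h
          exact hfx (by simp [hF1, hr, h])
        refine Finset.one_lt_card.mpr ⟨r, ?_, g r, ?_, (Ne.symm hgr)⟩
        · simp [hrepfix r hr]
        · simp only [Finset.mem_filter]
          exact ⟨Finset.mem_univ _, by rw [hrepg r, hrepfix r hr]⟩
    have hsum : ∑ r ∈ R, (if r ∈ F1 then 1 else 2) ≤ n := by
      rw [hn, ← Finset.card_univ, hfib]
      exact Finset.sum_le_sum hbig
    have hF1R : F1 ⊆ R := Finset.filter_subset _ _
    have heq1 : R.filter (fun r => r ∈ F1) = F1 := by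
      ext r
      simp only [Finset.mem_filter, hF1]
      tauto
    have hsum2 : ∑ r ∈ R, (if r ∈ F1 then 1 else 2) = F1.card + 2 * (R.card - F1.card) := by
      rw [Finset.sum_ite, Finset.sum_const, Finset.sum_const, heq1, Finset.filter_not, heq1,
        Finset.card_sdiff_of_subset hF1R]
      simp [mul_comm]
    rw [hsum2] at hsum
    have : F1.card ≤ R.card := Finset.card_le_card hF1R
    omega
  -- invariance facts
  have hinv : ∀ Δ : Finset Ω, Δ.image g = Δ → ∀ x y : Ω, g.SameCycle x y → (x ∈ Δ ↔ y ∈ Δ) := by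
    intro Δ hΔ
    have hmemg : ∀ x, x ∈ Δ ↔ g x ∈ Δ := by
      intro x
      constructor
      · intro hx
        rw [← hΔ]
        exact Finset.mem_image_of_mem g hx
      · intro hx
        rw [← hΔ] at hx
        obtain ⟨y, hy, hyx⟩ := Finset.mem_image.mp hx
        rwa [← g.injective hyx]
    have hnat : ∀ m : ℕ, ∀ x, x ∈ Δ ↔ (g ^ m) x ∈ Δ := by
      intro m
      induction m with
      | zero => simp
      | succ m ih =>
        intro x
        have : (g ^ (m + 1)) x = (g ^ m) (g x) := by
          rw [pow_succ, Equiv.Perm.mul_apply]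
        rw [this]
        exact (hmemg x).trans (ih (g x))
    have hzpow : ∀ i : ℤ, ∀ x, x ∈ Δ ↔ (g ^ i) x ∈ Δ := by
      intro i x
      cases i with
      | ofNat m => rw [Int.ofNat_eq_coe, zpow_natCast]; exact hnat m x
      | negSucc m =>
        rw [zpow_negSucc]
        set y := ((g ^ (m + 1))⁻¹ : Equiv.Perm Ω) x with hy
        have hxy : (g ^ (m + 1)) y = x := by rw [hy]; simp
        have := hnat (m + 1) y
        rw [hxy] at this
        exact this.symm
    intro x y hxy
    obtain ⟨i, hi⟩ := hxy
    rw [← hi]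
    exact hzpow i x
  -- injection into small subsets of R
  have hMR : R.card ≤ 3 * n / 4 := by
    rw [Nat.le_div_iff_mul_le (by norm_num)]
    omega
  calc ((Finset.univ.powersetCard j).filter (fun Δ : Finset Ω => Δ.image g = Δ)).card
      ≤ ((Finset.range (j + 1)).biUnion (fun s => R.powersetCard s)).card := by
        apply Finset.card_le_card_of_injOn (fun Δ => Δ.image rep)
        · intro Δ hΔ
          simp only [Finset.mem_coe, Finset.mem_filter, Finset.mem_powersetCard_univ] at hΔ
          obtain ⟨hcard, hΔg⟩ := hΔ
          apply Finset.mem_biUnion.mpr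
          refine ⟨(Δ.image rep).card, ?_, ?_⟩
          · apply Finset.mem_range.mpr
            have := Finset.card_image_le (s := Δ) (f := rep)
            omega
          · apply Finset.mem_powersetCard.mpr
            refine ⟨?_, rfl⟩
            intro y hy
            obtain ⟨x, -, rfl⟩ := Finset.mem_image.mp hy
            exact hrepR x
        · intro Δ₁ h₁ Δ₂ h₂ heq
          simp only [Finset.mem_coe, Finset.mem_filter, Finset.mem_powersetCard_univ] at h₁ h₂
          simp only at heq
          ext x
          constructor
          · intro hx
            have : rep x ∈ Δ₂.image rep := by
              rw [← heq]
              exact Finset.mem_image_of_mem rep hx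
            obtain ⟨y, hy, hyx⟩ := Finset.mem_image.mp this
            exact (hinv Δ₂ h₂.2 y x (hsame_of_repeq y x hyx)).mp hy
          · intro hx
            have : rep x ∈ Δ₁.image rep := by
              rw [heq]
              exact Finset.mem_image_of_mem rep hx
            obtain ⟨y, hy, hyx⟩ := Finset.mem_image.mp this
            exact (hinv Δ₁ h₁.2 y x (hsame_of_repeq y x hyx)).mp hy
    _ ≤ ∑ s ∈ Finset.range (j + 1), (R.powersetCard s).card := Finset.card_biUnion_le
    _ ≤ ∑ s ∈ Finset.range (j + 1), Nat.choose (3 * n / 4) s := by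
        apply Finset.sum_le_sum
        intro s hs
        rw [Finset.card_powersetCard]
        exact Nat.choose_le_choose s hMR


open Finset

lemma choose_mono_half {M s t : ℕ} (hst : s ≤ t) (ht : 2 * t ≤ M) :
    Nat.choose M s ≤ Nat.choose M t := by
  induction t, hst using Nat.le_induction with
  | base => exact le_refl _
  | succ t hst ih =>
    have h2t : 2 * t ≤ M := by omega
    refine le_trans (ih h2t) (Nat.choose_le_succ_of_lt_half_left ?_)
    omega

lemma desc_estimate (M n : ℕ) (h : 4 * M ≤ 3 * n) :
    ∀ q : ℕ, 4 ^ q * Nat.descFactorial M q ≤ 3 ^ q * Nat.descFactorial n q := by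
  intro q
  induction q with
  | zero => simp
  | succ q ih =>
    rw [Nat.descFactorial_succ, Nat.descFactorial_succ, pow_succ, pow_succ]
    calc 4 ^ q * 4 * ((M - q) * Nat.descFactorial M q)
        = (4 * (M - q)) * (4 ^ q * Nat.descFactorial M q) := by ring
      _ ≤ (3 * (n - q)) * (3 ^ q * Nat.descFactorial n q) :=
          Nat.mul_le_mul (by omega) ih
      _ = 3 ^ q * 3 * ((n - q) * Nat.descFactorial n q) := by ring

lemma choose_estimate (M n q : ℕ) (h : 4 * M ≤ 3 * n) :
    4 ^ q * Nat.choose M q ≤ 3 ^ q * Nat.choose n q := by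
  have := desc_estimate M n h q
  rw [Nat.descFactorial_eq_factorial_mul_choose, Nat.descFactorial_eq_factorial_mul_choose] at this
  have hq : 0 < q.factorial := Nat.factorial_pos q
  refine Nat.le_of_mul_le_mul_left ?_ hq
  calc q.factorial * (4 ^ q * Nat.choose M q) = 4 ^ q * (q.factorial * Nat.choose M q) := by ring
    _ ≤ 3 ^ q * (q.factorial * Nat.choose n q) := this
    _ = q.factorial * (3 ^ q * Nat.choose n q) := by ring

lemma pow_two_third (q : ℕ) : 2 ^ (q / 3) * 3 ^ q ≤ 4 ^ q := by
  obtain ⟨a, b, hq, hb⟩ : ∃ a b, q = 3 * a + b ∧ a = q / 3 := ⟨q / 3, q % 3, by omega, rfl⟩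
  subst hq
  rw [← hb]
  calc 2 ^ a * 3 ^ (3 * a + b) = 2 ^ a * (3 ^ (3 * a) * 3 ^ b) := by rw [pow_add]
    _ = (2 ^ a * 27 ^ a) * 3 ^ b := by rw [pow_mul]; norm_num; ring
    _ = 54 ^ a * 3 ^ b := by rw [← mul_pow]; norm_num
    _ ≤ 64 ^ a * 4 ^ b := Nat.mul_le_mul (Nat.pow_le_pow_left (by norm_num) a)
        (Nat.pow_le_pow_left (by norm_num) b)
    _ = 4 ^ (3 * a + b) := by rw [pow_add, pow_mul]; norm_num

lemma quad_le_pow : ∀ t : ℕ, 12 ≤ t → 3 * ((2 * t + 2) * (2 * t + 4) + 1) ≤ 2 ^ t := by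
  intro t ht
  induction t, ht using Nat.le_induction with
  | base => norm_num
  | succ t ht ih =>
    have : 3 * ((2 * (t + 1) + 2) * (2 * (t + 1) + 4) + 1)
        ≤ 2 * (3 * ((2 * t + 2) * (2 * t + 4) + 1)) := by nlinarith
    calc 3 * ((2 * (t + 1) + 2) * (2 * (t + 1) + 4) + 1)
        ≤ 2 * (3 * ((2 * t + 2) * (2 * t + 4) + 1)) := this
      _ ≤ 2 * 2 ^ t := by omega
      _ = 2 ^ (t + 1) := by rw [pow_succ]; ring

lemma numeric_main (n j cG : ℕ) (hn : 2 ^ 24 ≤ n) (hj2 : 2 * j ≤ n) (hjs : Nat.sqrt n ≤ j)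
    (hcG : cG ≤ n ^ (Nat.log 2 n + 2)) :
    cG * ∑ s ∈ Finset.range (j + 1), Nat.choose (3 * n / 4) s < Nat.choose n j := by
  set L := Nat.log 2 n with hL
  set M := 3 * n / 4 with hM
  set q := min j (M / 2) with hq
  have hnpos : 0 < n := by positivity
  have h4M : 4 * M ≤ 3 * n := by
    have := Nat.div_mul_le_self (3 * n) 4
    omega
  have hMn : M ≤ n := by
    have := Nat.div_le_self (3 * n) 4
    omega
  -- sqrt facts
  have hsqrt_ge : 2 ^ 12 ≤ Nat.sqrt n := by
    rw [Nat.le_sqrt]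
    calc 2 ^ 12 * 2 ^ 12 = 2 ^ 24 := by norm_num
      _ ≤ n := hn
  have hsqrt_sq : Nat.sqrt n * Nat.sqrt n ≤ n := Nat.sqrt_le n
  have hsqrtM : Nat.sqrt n ≤ M / 2 := by
    have h8 : Nat.sqrt n * 8 ≤ n := by
      have h1 : (8 : ℕ) ≤ Nat.sqrt n := le_trans (by norm_num) hsqrt_ge
      calc Nat.sqrt n * 8 ≤ Nat.sqrt n * Nat.sqrt n := Nat.mul_le_mul_left _ h1
        _ ≤ n := Nat.sqrt_le n
    have hdiv : Nat.sqrt n ≤ n / 8 := (Nat.le_div_iff_mul_le (by norm_num)).mpr h8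
    have heq : M / 2 = 3 * n / 8 := by
      rw [hM, Nat.div_div_eq_div_mul]
    rw [heq]
    exact le_trans hdiv (Nat.div_le_div_right (by omega))
  have hqsqrt : Nat.sqrt n ≤ q := le_min hjs hsqrtM
  have hqj : q ≤ j := min_le_left _ _
  have hq2M : 2 * q ≤ M := by
    have h1 : q ≤ M / 2 := min_le_right _ _
    have := Nat.div_mul_le_self M 2
    omega
  -- sum bound
  have hCs : ∀ s ∈ Finset.range (j + 1), Nat.choose M s ≤ Nat.choose M q := by
    intro s hs
    rw [Finset.mem_range] at hs
    rcases le_or_gt s q with h | h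
    · exact choose_mono_half h hq2M
    · have hqM : q = M / 2 := by
        rcases min_cases j (M / 2) with ⟨h1, h2⟩ | ⟨h1, h2⟩
        · omega
        · omega
      rw [hqM]
      exact Nat.choose_le_middle s M
  have hSum : ∑ s ∈ Finset.range (j + 1), Nat.choose M s ≤ (j + 1) * Nat.choose M q := by
    calc ∑ s ∈ Finset.range (j + 1), Nat.choose M s
        ≤ ∑ _s ∈ Finset.range (j + 1), Nat.choose M q := Finset.sum_le_sum hCs
      _ = (j + 1) * Nat.choose M q := by rw [Finset.sum_const, Finset.card_range, smul_eq_mul]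
  -- binomial estimates
  have hCq : 4 ^ q * Nat.choose M q ≤ 3 ^ q * Nat.choose n q := choose_estimate M n q h4M
  have hCnq : Nat.choose n q ≤ Nat.choose n j := choose_mono_half hqj hj2
  -- the key numeric inequality
  have hL24 : 24 ≤ L := by
    rw [hL]
    calc 24 = Nat.log 2 (2 ^ 24) := (Nat.log_pow (by norm_num) 24).symm
      _ ≤ Nat.log 2 n := Nat.log_mono_right hn
  have hnle : n ≤ 2 ^ (L + 1) := le_of_lt (Nat.lt_pow_succ_log_self (by norm_num) n)
  have h2L : 2 ^ (L / 2) ≤ Nat.sqrt n := by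
    rw [Nat.le_sqrt]
    calc 2 ^ (L / 2) * 2 ^ (L / 2) = 2 ^ (L / 2 + L / 2) := by rw [pow_add]
      _ ≤ 2 ^ L := Nat.pow_le_pow_right (by norm_num) (by omega)
      _ ≤ n := Nat.pow_log_le_self 2 (by omega)
  have hqbig : 3 * ((L + 1) * (L + 3) + 1) ≤ q := by
    set t := L / 2 with hT
    have ht12 : 12 ≤ t := by omega
    have hLt : L ≤ 2 * t + 1 := by omega
    have h1 : 3 * ((L + 1) * (L + 3) + 1) ≤ 3 * ((2 * t + 2) * (2 * t + 4) + 1) := by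
      have : (L + 1) * (L + 3) ≤ (2 * t + 2) * (2 * t + 4) :=
        Nat.mul_le_mul (by omega) (by omega)
      omega
    calc 3 * ((L + 1) * (L + 3) + 1) ≤ 3 * ((2 * t + 2) * (2 * t + 4) + 1) := h1
      _ ≤ 2 ^ t := quad_le_pow t ht12
      _ ≤ Nat.sqrt n := h2L
      _ ≤ q := hqsqrt
  have hKEY : cG * (j + 1) < 2 ^ (q / 3) := by
    have hj1 : j + 1 ≤ n := by
      have : 1 ≤ j := le_trans (le_trans (by norm_num : (1:ℕ) ≤ 2 ^ 12) hsqrt_ge) hjs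
      omega
    have h1 : cG * (j + 1) ≤ n ^ (L + 2) * n := Nat.mul_le_mul hcG hj1
    have h2 : n ^ (L + 2) * n = n ^ (L + 3) := by rw [← pow_succ]
    have h3 : n ^ (L + 3) ≤ (2 ^ (L + 1)) ^ (L + 3) := Nat.pow_le_pow_left hnle _
    have h4 : (2 ^ (L + 1)) ^ (L + 3) = 2 ^ ((L + 1) * (L + 3)) := by rw [← pow_mul]
    have h5 : (L + 1) * (L + 3) < q / 3 := by
      have : ((L + 1) * (L + 3) + 1) * 3 ≤ q := by omega
      have := (Nat.le_div_iff_mul_le (by norm_num : (0:ℕ) < 3)).mpr this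
      omega
    have h6 : 2 ^ ((L + 1) * (L + 3)) < 2 ^ (q / 3) :=
      Nat.pow_lt_pow_right (by norm_num) h5
    omega
  have hKEY' : cG * (j + 1) * 3 ^ q < 4 ^ q := by
    calc cG * (j + 1) * 3 ^ q < 2 ^ (q / 3) * 3 ^ q :=
        (Nat.mul_lt_mul_right (by positivity)).mpr hKEY
      _ ≤ 4 ^ q := pow_two_third q
  -- assemble
  have hjn : j ≤ n := by omega
  have hCnjpos : 0 < Nat.choose n j := Nat.choose_pos hjn
  have hfinal : 4 ^ q * (cG * ∑ s ∈ Finset.range (j + 1), Nat.choose M s)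
      < 4 ^ q * Nat.choose n j := by
    calc 4 ^ q * (cG * ∑ s ∈ Finset.range (j + 1), Nat.choose M s)
        ≤ 4 ^ q * (cG * ((j + 1) * Nat.choose M q)) := by
          exact Nat.mul_le_mul_left _ (Nat.mul_le_mul_left _ hSum)
      _ = (cG * (j + 1)) * (4 ^ q * Nat.choose M q) := by ring
      _ ≤ (cG * (j + 1)) * (3 ^ q * Nat.choose n q) := Nat.mul_le_mul_left _ hCq
      _ ≤ (cG * (j + 1)) * (3 ^ q * Nat.choose n j) :=
          Nat.mul_le_mul_left _ (Nat.mul_le_mul_left _ hCnq)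
      _ = (cG * (j + 1) * 3 ^ q) * Nat.choose n j := by ring
      _ < 4 ^ q * Nat.choose n j := (Nat.mul_lt_mul_right hCnjpos).mpr hKEY'
  exact Nat.lt_of_mul_lt_mul_left hfinal

end Aux

/-- **Asymmetric subsets of many sizes in primitive solvable groups.**
There exist `ε > 0` and a threshold `n₁` such that: if `G ≤ Sym(Ω)` is a primitive
solvable permutation group of degree `n = |Ω| ≥ n₁`, then for every integer `j` with
`n^(1-ε) ≤ j ≤ n/2` there is a `G`-asymmetric subset `Δ ⊆ Ω` of size `j`, i.e. a subset
of size `j` whose setwise stabilizer in `G` is trivial. -/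
theorem primitive_solvable_asymmetric_subsets_of_many_sizes :
    ∃ ε : ℝ, 0 < ε ∧ ∃ n₁ : ℕ,
      ∀ (Ω : Type) [Fintype Ω] (G : Subgroup (Equiv.Perm Ω)),
        MulAction.IsPretransitive ↥G Ω →
        (∀ B : Set Ω, MulAction.IsBlock ↥G B → B.Subsingleton ∨ B = Set.univ) →
        IsSolvable ↥G →
        n₁ ≤ Fintype.card Ω →
        ∀ j : ℕ, (Fintype.card Ω : ℝ) ^ ((1 : ℝ) - ε) ≤ (j : ℝ) →
          2 * j ≤ Fintype.card Ω →
          ∃ Δ : Set Ω, Δ.ncard = j ∧ setwiseStabilizer G Δ = ⊥ := by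
  refine ⟨1/2, by norm_num, 2 ^ 24, ?_⟩
  intro Ω _ G htrans hprim hsolv hn j hj1 hj2
  classical
  set n := Fintype.card Ω with hndef
  have hn2 : 2 ≤ n := le_trans (by norm_num) hn
  have hnpos : 0 < n := by omega
  have hNE : Nonempty Ω := Fintype.card_pos_iff.mp hnpos
  obtain ⟨V, hVG, hnorm, hcomm, hVtrans⟩ := exists_V G htrans hprim hsolv hn2
  -- fixed point bound, finset form
  have hfixall : ∀ g ∈ G, g ≠ 1 → 2 * (Finset.univ.filter fun x => g x = x).card ≤ n := by
    intro g hg hg1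
    have := fix_bound hcomm hVtrans hVG hnorm g hg hg1
    rwa [Nat.card_eq_fintype_card, Fintype.card_subtype] at this
  have hcG : Nat.card G ≤ n ^ (Nat.log 2 n + 2) := card_G_le hcomm hVtrans hVG hnorm
  -- j ≥ sqrt n
  have hjs : Nat.sqrt n ≤ j := by
    have h1 : ((Nat.sqrt n : ℝ)) ≤ (j : ℝ) := by
      have hs : ((Nat.sqrt n : ℝ)) ≤ Real.sqrt n := by
        have h0 : ((Nat.sqrt n * Nat.sqrt n : ℕ) : ℝ) ≤ (n : ℝ) := by
          exact_mod_cast Nat.sqrt_le n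
        have h := Real.sqrt_le_sqrt h0
        rwa [show ((Nat.sqrt n * Nat.sqrt n : ℕ) : ℝ)
            = (Nat.sqrt n : ℝ) * (Nat.sqrt n : ℝ) by push_cast; ring,
          Real.sqrt_mul_self (by positivity)] at h
      have hr : Real.sqrt n = (n : ℝ) ^ ((1 : ℝ) - 1/2) := by
        rw [Real.sqrt_eq_rpow]
        norm_num
      exact le_trans (hs.trans_eq hr) hj1
    exact_mod_cast h1
  -- counting
  set P : Finset (Finset Ω) := Finset.univ.powersetCard j with hP
  set Bad : Finset (Finset Ω) :=
    P.filter (fun Δ => ∃ g, g ∈ G ∧ g ≠ 1 ∧ Δ.image g = Δ) with hBad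
  set GF : Finset (Equiv.Perm Ω) := (Set.toFinite (G : Set (Equiv.Perm Ω))).toFinset with hGF
  have hGFcard : GF.card = Nat.card G := by
    rw [hGF, ← Set.ncard_eq_toFinset_card _ (Set.toFinite (G : Set (Equiv.Perm Ω)))]
    exact (Nat.card_coe_set_eq _).symm
  have hBadsub : Bad ⊆ (GF.erase 1).biUnion
      (fun g => P.filter (fun Δ => Δ.image g = Δ)) := by
    intro Δ hΔ
    rw [hBad, Finset.mem_filter] at hΔ
    obtain ⟨hΔP, g, hgG, hg1, hgΔ⟩ := hΔ
    apply Finset.mem_biUnion.mpr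
    refine ⟨g, Finset.mem_erase.mpr ⟨hg1, ?_⟩, Finset.mem_filter.mpr ⟨hΔP, hgΔ⟩⟩
    rw [hGF, Set.Finite.mem_toFinset]
    exact hgG
  have hBadcard : Bad.card < P.card := by
    have h1 : Bad.card ≤ ∑ g ∈ GF.erase 1, (P.filter (fun Δ => Δ.image g = Δ)).card :=
      le_trans (Finset.card_le_card hBadsub) (Finset.card_biUnion_le)
    have h2 : ∀ g ∈ GF.erase 1, (P.filter (fun Δ => Δ.image g = Δ)).card
        ≤ ∑ s ∈ Finset.range (j + 1), Nat.choose (3 * n / 4) s := by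
      intro g hg
      rw [Finset.mem_erase, hGF, Set.Finite.mem_toFinset] at hg
      exact invariant_count_s14 g (hfixall g hg.2 hg.1) j
    have h3 : Bad.card ≤ (GF.erase 1).card *
        ∑ s ∈ Finset.range (j + 1), Nat.choose (3 * n / 4) s := by
      refine le_trans h1 ?_
      calc ∑ g ∈ GF.erase 1, (P.filter (fun Δ => Δ.image g = Δ)).card
          ≤ ∑ _g ∈ GF.erase 1, ∑ s ∈ Finset.range (j + 1), Nat.choose (3 * n / 4) s :=
            Finset.sum_le_sum h2
        _ = (GF.erase 1).card * ∑ s ∈ Finset.range (j + 1), Nat.choose (3 * n / 4) s := by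
            rw [Finset.sum_const, smul_eq_mul]
    have h4 : (GF.erase 1).card ≤ Nat.card G := by
      rw [← hGFcard]
      exact Finset.card_le_card (Finset.erase_subset _ _)
    have h5 : P.card = Nat.choose n j := by
      rw [hP, Finset.card_powersetCard, Finset.card_univ]
    rw [h5]
    calc Bad.card ≤ Nat.card G * ∑ s ∈ Finset.range (j + 1), Nat.choose (3 * n / 4) s :=
          le_trans h3 (Nat.mul_le_mul_right _ h4)
      _ < Nat.choose n j := numeric_main n j (Nat.card G) hn hj2 hjs hcG
  -- extract a good set
  have hss : Bad ⊂ P := by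
    refine Finset.ssubset_iff_subset_ne.mpr ⟨Finset.filter_subset _ _, ?_⟩
    intro h
    rw [h] at hBadcard
    omega
  obtain ⟨Δ, hΔP, hΔBad⟩ := Finset.exists_of_ssubset hss
  have hΔcard : Δ.card = j := (Finset.mem_powersetCard_univ.mp hΔP)
  have hgood : ∀ g, g ∈ G → g ≠ 1 → ¬(Δ.image g = Δ) := by
    intro g hgG hg1 hgΔ
    exact hΔBad (Finset.mem_filter.mpr ⟨hΔP, g, hgG, hg1, hgΔ⟩)
  refine ⟨(Δ : Set Ω), by simp [Set.ncard_coe_finset, hΔcard], ?_⟩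
  rw [eq_bot_iff]
  intro x hx
  have hx' : (x : Equiv.Perm Ω) '' (Δ : Set Ω) = (Δ : Set Ω) := hx
  have hfin : Δ.image (x : Equiv.Perm Ω) = Δ := by
    apply Finset.coe_injective
    rw [Finset.coe_image]
    exact hx'
  have hx1 : (x : Equiv.Perm Ω) = 1 := by
    by_contra h
    exact hgood _ x.2 h hfin
  simpa [Subgroup.mem_bot] using Subtype.ext hx1
end

section
/- Let H₁, …, H_r be finite groups and let G be a subdirect product of them, i.e., a subgroup G ≤ H₁ × ⋯ × H_r such that each coordinate projection π_i : G → H_i is surjective, with kernels M_i = ker(π_i) ∩ G. Let T be a finite nonabelian simple group and φ : G → T a surjective homomorphism with kernel K. Then there exists an index i such that M_i ≤ K. -/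
/-- **Subdirect product lemma.**
Let `H₁, …, H_r` be finite groups and let `G ≤ H₁ × ⋯ × H_r` be a subdirect product:
every coordinate projection `π i : G → H i` is surjective; write `M i` for the kernel
of `π i` on `G`.  Let `T` be a finite nonabelian simple group and `φ : G → T` a
surjective homomorphism with kernel `K`.  Then `M i ≤ K` for some index `i`. -/
theorem subdirect_product_lemma {r : ℕ} (H : Fin r → Type*)
    [∀ i, Group (H i)] [∀ i, Finite (H i)]
    (G : Subgroup (∀ i, H i))
    (hsurj : ∀ i : Fin r,
      Function.Surjective ((Pi.evalMonoidHom H i).comp G.subtype))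
    (T : Type*) [Group T] [Finite T]
    (hsimple : IsSimpleGroup T) (hnonabelian : ∃ a b : T, a * b ≠ b * a)
    (φ : ↥G →* T) (hφ : Function.Surjective φ) :
    ∃ i : Fin r, ((Pi.evalMonoidHom H i).comp G.subtype).ker ≤ φ.ker := by
  by_contra hcon
  push_neg at hcon
  set M : Fin r → Subgroup G := fun i => ((Pi.evalMonoidHom H i).comp G.subtype).ker with hM
  have hnontriv : Nontrivial T := by
    obtain ⟨a, b, hab⟩ := hnonabelian
    refine ⟨a, 1, fun h => hab ?_⟩
    subst h; simp
  -- T is perfect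
  have hperf : ⁅(⊤ : Subgroup T), (⊤ : Subgroup T)⁆ = ⊤ := by
    rcases hsimple.eq_bot_or_eq_top_of_normal ⁅(⊤ : Subgroup T), (⊤ : Subgroup T)⁆
      inferInstance with h | h
    · exfalso
      obtain ⟨a, b, hab⟩ := hnonabelian
      have hmem : (open scoped commutatorElement in ⁅a, b⁆) ∈ ⁅(⊤ : Subgroup T), (⊤ : Subgroup T)⁆ :=
        Subgroup.commutator_mem_commutator (Subgroup.mem_top a) (Subgroup.mem_top b)
      rw [h, Subgroup.mem_bot, commutatorElement_eq_one_iff_mul_comm] at hmem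
      exact hab hmem
    · exact h
  -- each M i maps onto T
  have hMtop : ∀ i, (M i).map φ = ⊤ := by
    intro i
    have hnorm : ((M i).map φ).Normal :=
      Subgroup.Normal.map (MonoidHom.normal_ker _) φ hφ
    rcases hsimple.eq_bot_or_eq_top_of_normal _ hnorm with h | h
    · exact absurd ((Subgroup.map_eq_bot_iff (M i)).mp h) (hcon i)
    · exact h
  -- finite intersections of the M i map onto T
  have key : ∀ s : Finset (Fin r), ((⨅ i ∈ s, M i).map φ) = ⊤ := by
    intro s
    induction s using Finset.induction_on with
    | empty => simp [Subgroup.map_top_of_surjective φ hφ]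
    | @insert a s ha ih =>
      rw [Finset.iInf_insert]
      set N : Subgroup G := ⨅ i ∈ s, M i with hN
      have hNnormal : N.Normal := by
        constructor
        intro n hn g
        simp only [hN, Subgroup.mem_iInf] at hn ⊢
        intro i hi
        exact (MonoidHom.normal_ker _).conj_mem n (hn i hi) g
      have hle : ⁅M a, N⁆ ≤ M a ⊓ N :=
        le_inf (Subgroup.commutator_le_left _ _) (Subgroup.commutator_le_right _ _)
      have : ⊤ ≤ (M a ⊓ N).map φ := by
        calc (⊤ : Subgroup T) = ⁅(⊤ : Subgroup T), (⊤ : Subgroup T)⁆ := hperf.symm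
          _ = ⁅(M a).map φ, N.map φ⁆ := by rw [hMtop a, ih]
          _ = (⁅M a, N⁆).map φ := (Subgroup.map_commutator _ _ _).symm
          _ ≤ (M a ⊓ N).map φ := Subgroup.map_mono hle
      exact top_le_iff.mp this
  -- but the intersection of all M i is trivial
  have hbot : (⨅ i ∈ (Finset.univ : Finset (Fin r)), M i) = ⊥ := by
    rw [eq_bot_iff]
    intro g hg
    simp only [Subgroup.mem_iInf, Finset.mem_univ, forall_true_left] at hg
    have hg1 : (g : ∀ i, H i) = 1 := by
      funext i
      have := hg i
      simpa [hM, MonoidHom.mem_ker] using this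
    exact Subgroup.mem_bot.mpr (Subtype.ext hg1)
  have := key Finset.univ
  rw [hbot, Subgroup.map_bot] at this
  exact absurd this bot_ne_top
end

section
/- Let H be a finite group and let A, B, C be normal subgroups of H satisfying AB = AC = BC = H, and suppose the quotient groups H/A and H/B are both nonabelian simple. Then A ∩ C is not contained in B. -/
open scoped Pointwise


/-- **Three normal subgroups lemma.**
Let `H` be a finite group and `A`, `B`, `C` normal subgroups with
`AB = AC = BC = H` (for normal subgroups, the product coincides with the join `⊔`),
such that the quotients `H/A` and `H/B` are nonabelian simple.
Then `A ∩ C` is not contained in `B`. -/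
theorem three_normal_subgroups_lemma {H : Type*} [Group H] [Finite H]
    (A B C : Subgroup H) [A.Normal] [B.Normal] [C.Normal]
    (hAB : A ⊔ B = ⊤) (hAC : A ⊔ C = ⊤) (hBC : B ⊔ C = ⊤)
    (hAsimple : IsSimpleGroup (H ⧸ A)) (hAnonab : ∃ x y : H ⧸ A, x * y ≠ y * x)
    (hBsimple : IsSimpleGroup (H ⧸ B)) (hBnonab : ∃ x y : H ⧸ B, x * y ≠ y * x) :
    ¬ (A ⊓ C ≤ B) := by
  intro hle
  obtain ⟨x, y, hxy⟩ := hBnonab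
  apply hxy
  -- lift x to an element of A
  obtain ⟨g, hg⟩ := QuotientGroup.mk_surjective x
  have hgmem : g ∈ ((A : Set H) * (B : Set H)) := by
    rw [← Subgroup.mul_normal, hAB]; trivial
  obtain ⟨a, ha, b, hb, hab⟩ := hgmem
  have hx : x = QuotientGroup.mk a := by
    rw [← hg, ← hab]
    have : (QuotientGroup.mk b : H ⧸ B) = 1 := (QuotientGroup.eq_one_iff b).mpr hb
    rw [QuotientGroup.mk_mul, this, mul_one]
  -- lift y to an element of C
  obtain ⟨g', hg'⟩ := QuotientGroup.mk_surjective y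
  have hgmem' : g' ∈ ((B : Set H) * (C : Set H)) := by
    rw [← Subgroup.mul_normal, hBC]; trivial
  obtain ⟨b', hb', c, hc, hbc⟩ := hgmem'
  have hy : y = QuotientGroup.mk c := by
    rw [← hg', ← hbc]
    have : (QuotientGroup.mk b' : H ⧸ B) = 1 := (QuotientGroup.eq_one_iff b').mpr hb'
    rw [QuotientGroup.mk_mul, this, one_mul]
  -- the commutator of a and c lies in A ⊓ C ≤ B
  have hk : a * c * a⁻¹ * c⁻¹ ∈ B := by
    apply hle
    constructor
    · have : c * a⁻¹ * c⁻¹ ∈ A := Subgroup.Normal.conj_mem ‹A.Normal› a⁻¹ (inv_mem ha) c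
      have := A.mul_mem ha this
      simpa [mul_assoc] using this
    · have : a * c * a⁻¹ ∈ C := Subgroup.Normal.conj_mem ‹C.Normal› c hc a
      exact C.mul_mem this (inv_mem hc)
  have : (QuotientGroup.mk (a * c) : H ⧸ B) = QuotientGroup.mk (c * a) := by
    rw [QuotientGroup.eq_iff_div_mem]
    have heq : (a * c) / (c * a) = a * c * a⁻¹ * c⁻¹ := by simp [div_eq_mul_inv, mul_inv_rev, mul_assoc]
    rw [heq]; exact hk
  rw [hx, hy, ← QuotientGroup.mk_mul, ← QuotientGroup.mk_mul, this]
end
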